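/- arXiv:2410.19654 — 4 statements merged into one kernel-verified Lean document; each statement's English description precedes it below -/
import Mathlib

section
/- Let 𝒜 be a finite alphabet and ℱ ⊆ 𝒜⁺ a set of forbidden factors. Suppose there exists a real β > 1 such that |𝒜| ≥ β + Σ_{f∈ℱ} β^{1−|f|} (the series on the right converging). Then for all n ≥ 0, |ℒ_{n+1}(𝒜,ℱ)| ≥ β·|ℒ_n(𝒜,ℱ)|. -/
open Filter

/-- The set of words of length `n` over the alphabet `A` avoiding every
forbidden factor in `F` (no element of `F` occurs as a contiguous subword). -/
def langN {A : Type*} (F : Set (List A)) (n : ℕ) : Set (List A) :=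
  {w | w.length = n ∧ ∀ f ∈ F, ¬ f <:+: w}

section aux
variable {A : Type*} [Fintype A] {F : Set (List A)}

lemma langN_finite (n : ℕ) : (langN F n).Finite :=
  (List.finite_length_eq A n).subset fun _ hw => hw.1

omit [Fintype A] in
lemma mem_langN_of_prefix {w u : List A} {n : ℕ} (hw : w ∈ langN F n) (hu : u <+: w) :
    u ∈ langN F u.length :=
  ⟨rfl, fun f hf hfu => hw.2 f hf (hfu.trans hu.isInfix)⟩

omit [Fintype A] in
lemma ncard_biUnion_le' {ι : Type*} (s : Finset ι) (t : ι → Set (List A)) :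
    (⋃ i ∈ s, t i).ncard ≤ ∑ i ∈ s, (t i).ncard := by
  classical
  induction s using Finset.induction with
  | empty => simp
  | @insert a s h ih =>
    rw [Finset.sum_insert h, Finset.set_biUnion_insert]
    exact le_trans (Set.ncard_union_le _ _) (add_le_add le_rfl ih)

/-- The set of one-letter extensions of words in `langN F n`. -/
def extSet (F : Set (List A)) (n : ℕ) : Set (List A) :=
  (fun p : List A × A => p.1 ++ [p.2]) '' (langN F n ×ˢ Set.univ)

omit [Fintype A] in
lemma concat_injective : Function.Injective (fun p : List A × A => p.1 ++ [p.2]) := by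
  rintro ⟨w, a⟩ ⟨w', a'⟩ h
  simp only at h
  have hl : w.length = w'.length := by
    have := congrArg List.length h
    simpa using this
  obtain ⟨h1, h2⟩ := List.append_inj h hl
  simp at h2
  simp [h1, h2]

lemma ncard_extSet (n : ℕ) :
    (extSet F n).ncard = Fintype.card A * (langN F n).ncard := by
  rw [extSet, Set.ncard_image_of_injective _ concat_injective]
  rw [← Nat.card_coe_set_eq, Nat.card_congr (Equiv.Set.prod _ _), Nat.card_prod,
    Nat.card_coe_set_eq, Nat.card_coe_set_eq, Set.ncard_univ,
    Nat.card_eq_fintype_card, mul_comm]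

omit [Fintype A] in
lemma length_of_mem_extSet {n : ℕ} {v : List A} (hv : v ∈ extSet F n) :
    v.length = n + 1 := by
  obtain ⟨⟨w, a⟩, ⟨hw, -⟩, rfl⟩ := hv
  simp [hw.1]

lemma extSet_finite (n : ℕ) : (extSet F n).Finite :=
  (List.finite_length_eq A (n + 1)).subset fun _ hv => length_of_mem_extSet hv

/-- bad extensions ending with `f` -/
def badSet (F : Set (List A)) (n : ℕ) (f : List A) : Set (List A) :=
  {v ∈ extSet F n | f <:+ v}

lemma badSet_ncard_le {n : ℕ} {f : List A} (hf : f ≠ []) :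
    (badSet F n f).ncard ≤ (langN F (n + 1 - f.length)).ncard := by
  have hinj : Set.InjOn (fun v : List A => v.take (n + 1 - f.length)) (badSet F n f) := by
    rintro v ⟨hv, u, rfl⟩ v' ⟨hv', u', rfl⟩ h
    have hu : u.length = n + 1 - f.length := by
      have := length_of_mem_extSet hv; simp at this; omega
    have hu' : u'.length = n + 1 - f.length := by
      have := length_of_mem_extSet hv'; simp at this; omega
    simp only [List.take_left' hu, List.take_left' hu'] at h
    rw [h]
  calc (badSet F n f).ncard
      = ((fun v : List A => v.take (n + 1 - f.length)) '' badSet F n f).ncard :=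
        (Set.ncard_image_of_injOn hinj).symm
    _ ≤ (langN F (n + 1 - f.length)).ncard := by
        apply Set.ncard_le_ncard _ (langN_finite _)
        rintro - ⟨v, ⟨hv, u, rfl⟩, rfl⟩
        obtain ⟨⟨w, a⟩, ⟨hw, -⟩, hwa⟩ := hv
        simp only at hwa
        have hu : u.length = n + 1 - f.length := by
          have : (u ++ f).length = n + 1 := by rw [← hwa]; simp [hw.1]
          simp at this; omega
        have hpre : u <+: w := by
          have h2 : (w ++ [a]).dropLast = (u ++ f).dropLast := by rw [hwa]
          rw [List.dropLast_append_of_ne_nil hf, List.dropLast_concat] at h2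
          exact ⟨f.dropLast, h2.symm⟩
        have := mem_langN_of_prefix hw hpre
        simpa [List.take_left' hu, hu] using this

omit [Fintype A] in
lemma extSet_cover {n : ℕ} {v : List A}
    (hv : v ∈ extSet F n) (hbad : v ∉ langN F (n + 1)) :
    ∃ f ∈ F, v ∈ badSet F n f := by
  obtain ⟨⟨w, a⟩, ⟨hw, -⟩, rfl⟩ := hv
  simp only at *
  have hlen : (w ++ [a]).length = n + 1 := by simp [hw.1]
  simp only [langN, Set.mem_setOf_eq, not_and, not_forall, _root_.not_imp, not_not] at hbad
  obtain ⟨f, hfF, hfinf⟩ := hbad hlen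
  refine ⟨f, hfF, ⟨⟨(w, a), ⟨hw, trivial⟩, rfl⟩, ?_⟩⟩
  obtain ⟨s, t, hst⟩ := hfinf
  rcases List.eq_nil_or_concat t with rfl | ⟨t', c, rfl⟩
  · exact ⟨s, by simpa using hst⟩
  · exfalso
    have h3 : (s ++ f ++ t') ++ [c] = w ++ [a] := by
      simpa [List.concat_eq_append, List.append_assoc] using hst
    obtain ⟨h1, -⟩ := List.append_inj' h3 rfl
    exact hw.2 f hfF ⟨s, t', by simpa using h1⟩

end aux


/-- If there is `β > 1` with `|𝒜| ≥ β + Σ_{f ∈ ℱ} β^(1-|f|)` (the series converging),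
then `|ℒ_{n+1}(𝒜,ℱ)| ≥ β · |ℒ_n(𝒜,ℱ)|` for all `n ≥ 0`. -/
theorem stmt0 {A : Type*} [Fintype A] (F : Set (List A))
    (hF : ∀ f ∈ F, f ≠ ([] : List A)) (β : ℝ) (hβ : 1 < β)
    (hsum : Summable fun f : F => β ^ ((1 : ℤ) - ((f : List A).length : ℤ)))
    (hcond : β + ∑' f : F, β ^ ((1 : ℤ) - ((f : List A).length : ℤ)) ≤ (Fintype.card A : ℝ)) :
    ∀ n : ℕ, β * ((langN F n).ncard : ℝ) ≤ ((langN F (n + 1)).ncard : ℝ) := by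
  classical
  have hβ0 : (0 : ℝ) < β := lt_trans one_pos hβ
  intro n
  induction n using Nat.strong_induction_on with
  | _ n IH =>
  set L : ℕ → ℝ := fun m => ((langN F m).ncard : ℝ) with hL
  have Lnonneg : ∀ m, 0 ≤ L m := fun m => Nat.cast_nonneg _
  have iter : ∀ d m, m + d = n → β ^ d * L m ≤ L n := by
    intro d
    induction d with
    | zero => intro m hm; subst hm; simp [L]
    | succ d ihd =>
      intro m hm
      have h1 : β * L m ≤ L (m + 1) := IH m (by omega)
      have h2 : β ^ d * L (m + 1) ≤ L n := ihd (m + 1) (by omega)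
      calc β ^ (d + 1) * L m = β ^ d * (β * L m) := by ring
        _ ≤ β ^ d * L (m + 1) := mul_le_mul_of_nonneg_left h1 (le_of_lt (pow_pos hβ0 d))
        _ ≤ L n := h2
  have hGfin : {f : F | (f : List A).length ≤ n + 1}.Finite :=
    Set.Finite.preimage (Subtype.val_injective.injOn) (List.finite_length_le A (n + 1))
  set G : Finset F := hGfin.toFinset with hG
  have cover : extSet F n ⊆ langN F (n + 1) ∪ ⋃ f ∈ G, badSet F n (f : List A) := by
    intro v hv
    by_cases hvg : v ∈ langN F (n + 1)
    · exact Or.inl hvg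
    · obtain ⟨f, hfF, hvf⟩ := extSet_cover hv hvg
      have hmem : (⟨f, hfF⟩ : F) ∈ (G : Set F) := by
        simp only [hG, Finset.coe_sort_coe, Set.Finite.coe_toFinset, Set.mem_setOf_eq]
        exact (hvf.2.length_le).trans (le_of_eq (length_of_mem_extSet hvf.1))
      exact Or.inr (Set.mem_biUnion hmem hvf)
  have hnat : Fintype.card A * (langN F n).ncard
      ≤ (langN F (n + 1)).ncard + ∑ f ∈ G, (badSet F n (f : List A)).ncard := by
    calc Fintype.card A * (langN F n).ncard = (extSet F n).ncard := (ncard_extSet n).symm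
      _ ≤ (langN F (n + 1) ∪ ⋃ f ∈ G, badSet F n (f : List A)).ncard := by
          refine Set.ncard_le_ncard cover ?_
          refine Set.Finite.union (langN_finite _) ?_
          refine Set.Finite.biUnion G.finite_toSet fun f _ => ?_
          exact (extSet_finite n).subset fun v hv => hv.1
      _ ≤ (langN F (n + 1)).ncard + (⋃ f ∈ G, badSet F n (f : List A)).ncard :=
          Set.ncard_union_le _ _
      _ ≤ _ := add_le_add le_rfl (ncard_biUnion_le' G _)
  -- now move to ℝ
  have hterm : ∀ f ∈ G, ((badSet F n (f : List A)).ncard : ℝ)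
      ≤ β ^ ((1 : ℤ) - ((f : List A).length : ℤ)) * L n := by
    intro f hfG
    have hfne : (f : List A) ≠ [] := hF f f.2
    have hlen1 : 1 ≤ (f : List A).length := List.length_pos_iff.mpr hfne
    have hlen2 : (f : List A).length ≤ n + 1 := by
      have := hfG; simp only [hG, Set.Finite.mem_toFinset, Set.mem_setOf_eq] at this
      exact this
    have h1 : ((badSet F n (f : List A)).ncard : ℝ) ≤ L (n + 1 - (f : List A).length) := by
      exact_mod_cast Nat.cast_le.mpr (badSet_ncard_le hfne)
    have h2 : β ^ ((f : List A).length - 1) * L (n + 1 - (f : List A).length) ≤ L n :=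
      iter _ _ (by omega)
    have hzpow : β ^ ((1 : ℤ) - ((f : List A).length : ℤ))
        = (β ^ ((f : List A).length - 1))⁻¹ := by
      rw [← zpow_natCast β ((f : List A).length - 1), ← zpow_neg]
      congr 1
      omega
    rw [hzpow]
    have hc : (0:ℝ) < β ^ ((f : List A).length - 1) := pow_pos hβ0 _
    have hci : (0:ℝ) ≤ (β ^ ((f : List A).length - 1))⁻¹ := inv_nonneg.mpr hc.le
    have hone : β ^ ((f : List A).length - 1) * (β ^ ((f : List A).length - 1))⁻¹ = 1 :=
      mul_inv_cancel₀ hc.ne'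
    nlinarith [h1, h2, hc, hci, hone, Lnonneg (n + 1 - (f : List A).length)]
  have hsumG : ∑ f ∈ G, β ^ ((1 : ℤ) - ((f : List A).length : ℤ))
      ≤ ∑' f : F, β ^ ((1 : ℤ) - ((f : List A).length : ℤ)) :=
    Summable.sum_le_tsum G (fun f _ => le_of_lt (zpow_pos hβ0 _)) hsum
  have hreal : (Fintype.card A : ℝ) * L n
      ≤ L (n + 1) + (∑' f : F, β ^ ((1 : ℤ) - ((f : List A).length : ℤ))) * L n := by
    have hcast : (Fintype.card A : ℝ) * L n
        ≤ L (n + 1) + ∑ f ∈ G, ((badSet F n (f : List A)).ncard : ℝ) := by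
      have hc2 := Nat.cast_le (α := ℝ) |>.mpr hnat
      push_cast at hc2
      simpa [hL] using hc2
    refine hcast.trans (add_le_add le_rfl ?_)
    calc ∑ f ∈ G, ((badSet F n (f : List A)).ncard : ℝ)
        ≤ ∑ f ∈ G, β ^ ((1 : ℤ) - ((f : List A).length : ℤ)) * L n :=
          Finset.sum_le_sum hterm
      _ = (∑ f ∈ G, β ^ ((1 : ℤ) - ((f : List A).length : ℤ))) * L n := by
          rw [Finset.sum_mul]
      _ ≤ _ := mul_le_mul_of_nonneg_right hsumG (Lnonneg n)
  nlinarith [hreal, Lnonneg n, hcond]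
end

section
/- Let 𝒜 be a finite alphabet and ℱ ⊆ 𝒜⁺ a set of forbidden factors. Suppose there exists a real β > 1 such that |𝒜| > β + Σ_{f∈ℱ} β^{1−|f|}. Then there exists a constant C > 0 such that for all n, m ≥ 0, |ℒ_{n+m}(𝒜,ℱ)| ≥ C·|ℒ_n(𝒜,ℱ)|·|ℒ_m(𝒜,ℱ)|. -/
open Filter

namespace Stmt2Aux

open Finset

set_option linter.unusedSectionVars false
set_option maxHeartbeats 1000000

variable {A : Type*} [Fintype A] {F : Set (List A)}

lemma langN_finite (F : Set (List A)) (n : ℕ) : (langN F n).Finite :=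
  (List.finite_length_eq A n).subset fun _ hw => hw.1

lemma mem_langN_of_infix {w u : List A} {n : ℕ} (hw : w ∈ langN F n) (hu : u <:+: w) :
    u ∈ langN F u.length :=
  ⟨rfl, fun f hf hinf => hw.2 f hf (hinf.trans hu)⟩

noncomputable def LF (F : Set (List A)) (n : ℕ) : Finset (List A) :=
  (langN_finite F n).toFinset

lemma mem_LF {w : List A} {n : ℕ} : w ∈ LF F n ↔ w ∈ langN F n := Set.Finite.mem_toFinset _

noncomputable def Lr (F : Set (List A)) (n : ℕ) : ℝ := ((LF F n).card : ℝ)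

lemma Lr_nonneg (F : Set (List A)) (n : ℕ) : 0 ≤ Lr F n := Nat.cast_nonneg _

lemma FF_finite (F : Set (List A)) (k : ℕ) : {l : List A | l ∈ F ∧ l.length ≤ k}.Finite :=
  (List.finite_length_le A k).subset fun _ h => h.2

noncomputable def FFk (F : Set (List A)) (k : ℕ) : Finset (List A) :=
  (FF_finite F k).toFinset

lemma mem_FFk {f : List A} {k : ℕ} : f ∈ FFk F k ↔ f ∈ F ∧ f.length ≤ k :=
  Set.Finite.mem_toFinset _

lemma langN_zero (hF : ∀ f ∈ F, f ≠ ([] : List A)) : langN F 0 = {([] : List A)} := by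
  ext w
  constructor
  · rintro ⟨h0, -⟩
    simpa using List.length_eq_zero_iff.1 h0
  · rintro rfl
    refine ⟨rfl, fun f hf hinf => hF f hf ?_⟩
    simpa using List.sublist_nil.1 hinf.sublist

lemma Lr_zero (hF : ∀ f ∈ F, f ≠ ([] : List A)) : Lr F 0 = 1 := by
  classical
  have h : LF F 0 = {([] : List A)} := by
    ext w; simp [mem_LF, langN_zero hF]
  simp [Lr, h]

lemma Lr_one_le : Lr F 1 ≤ (Fintype.card A : ℝ) := by
  classical
  have hsub : LF F 1 ⊆ (Finset.univ : Finset A).image (fun a => [a]) := by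
    intro w hw
    obtain ⟨a, rfl⟩ := List.length_eq_one_iff.1 (mem_LF.1 hw).1
    simp
  have h1 : (LF F 1).card ≤ Fintype.card A := by
    calc (LF F 1).card ≤ ((Finset.univ : Finset A).image (fun a => [a])).card :=
          card_le_card hsub
      _ ≤ (Finset.univ : Finset A).card := card_image_le
      _ = Fintype.card A := card_univ
  unfold Lr
  exact_mod_cast h1

lemma counting (hF : ∀ f ∈ F, f ≠ ([] : List A)) (n : ℕ) :
    (LF F n).card * Fintype.card A ≤
      (LF F (n+1)).card + ∑ f ∈ FFk F (n+1), (LF F (n + 1 - f.length)).card := by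
  classical
  have hinj : Function.Injective (fun p : List A × A => p.1 ++ [p.2]) := by
    rintro ⟨w, a⟩ ⟨v, b⟩ h
    simp only at h
    have hlen : w.length = v.length := by
      have := congrArg List.length h; simpa using this
    obtain ⟨h1, h2⟩ := List.append_inj h hlen
    simp only [List.cons.injEq] at h2
    exact Prod.ext h1 h2.1
  have hsub : ((LF F n) ×ˢ (univ : Finset A)).image (fun p : List A × A => p.1 ++ [p.2]) ⊆
      LF F (n+1) ∪ (FFk F (n+1)).biUnion
        (fun f => (LF F (n+1-f.length)).image (fun p => p ++ f)) := by
    intro x hx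
    simp only [mem_image, mem_product] at hx
    obtain ⟨⟨w, a⟩, ⟨hw, -⟩, rfl⟩ := hx
    have hwmem : w ∈ langN F n := mem_LF.1 hw
    by_cases hgood : w ++ [a] ∈ langN F (n+1)
    · exact mem_union_left _ (mem_LF.2 hgood)
    · have hlen : (w ++ [a]).length = n+1 := by simp [hwmem.1]
      have hex : ∃ f ∈ F, f <:+: (w ++ [a]) := by
        by_contra hcon
        push_neg at hcon
        exact hgood ⟨hlen, fun f hf => hcon f hf⟩
      obtain ⟨f, hfF, s, t, hst⟩ := hex
      have hfpos : 1 ≤ f.length := List.length_pos_iff.2 (hF f hfF)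
      rcases List.eq_nil_or_concat t with rfl | ⟨t', c, rfl⟩
      · simp only [List.append_nil] at hst
        have hslen : s.length + f.length = n + 1 := by
          have := congrArg List.length hst
          simp [hwmem.1] at this
          omega
        have hspref : s <+: w := by
          refine List.prefix_of_prefix_length_le ⟨f, hst⟩ ⟨[a], rfl⟩ ?_
          simp [hwmem.1]; omega
        have hsmem : s ∈ langN F s.length := mem_langN_of_infix hwmem hspref.isInfix
        refine mem_union_right _ (mem_biUnion.2 ⟨f, mem_FFk.2 ⟨hfF, by omega⟩, ?_⟩)
        refine mem_image.2 ⟨s, mem_LF.2 ?_, hst⟩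
        have he : s.length = n + 1 - f.length := by omega
        rw [← he]; exact hsmem
      · rw [List.concat_eq_append] at hst
        have hst' : (s ++ f ++ t') ++ [c] = w ++ [a] := by
          rw [← hst]; simp [List.append_assoc]
        obtain ⟨h1, -⟩ := List.append_inj' hst' rfl
        exact absurd ⟨s, t', h1⟩ (hwmem.2 f hfF)
  calc (LF F n).card * Fintype.card A
      = ((LF F n) ×ˢ (univ : Finset A)).card := by simp [card_product]
    _ = (((LF F n) ×ˢ (univ : Finset A)).image (fun p : List A × A => p.1 ++ [p.2])).card :=
        (card_image_of_injective _ hinj).symm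
    _ ≤ (LF F (n+1) ∪ (FFk F (n+1)).biUnion
          (fun f => (LF F (n+1-f.length)).image (fun p => p ++ f))).card := card_le_card hsub
    _ ≤ (LF F (n+1)).card + ((FFk F (n+1)).biUnion
          (fun f => (LF F (n+1-f.length)).image (fun p => p ++ f))).card := card_union_le _ _
    _ ≤ (LF F (n+1)).card + ∑ f ∈ FFk F (n+1),
          ((LF F (n+1-f.length)).image (fun p => p ++ f)).card :=
        add_le_add le_rfl (card_biUnion_le)
    _ ≤ (LF F (n+1)).card + ∑ f ∈ FFk F (n+1), (LF F (n + 1 - f.length)).card :=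
        add_le_add le_rfl (sum_le_sum fun f _ => card_image_le)

lemma crossing (hF : ∀ f ∈ F, f ≠ ([] : List A)) (n m : ℕ) :
    (LF F n).card * (LF F m).card ≤
      (LF F (n+m)).card + ∑ f ∈ FFk F (n+m), ∑ i ∈ Finset.range n,
        (if n+1 ≤ i + f.length ∧ i + f.length ≤ n+m then
          (LF F i).card * (LF F (n+m-f.length-i)).card else 0) := by
  classical
  set Φ : List A × List A → List A := fun p => p.1 ++ p.2 with hΦ
  have hinj : Set.InjOn Φ ↑((LF F n) ×ˢ (LF F m)) := by
    rintro ⟨u₁, v₁⟩ h1 ⟨u₂, v₂⟩ h2 h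
    simp only [coe_product, Set.mem_prod, mem_coe] at h1 h2
    have e1 : u₁.length = n := (mem_LF.1 h1.1).1
    have e2 : u₂.length = n := (mem_LF.1 h2.1).1
    obtain ⟨ha, hb⟩ := List.append_inj h (e1.trans e2.symm)
    exact Prod.ext ha hb
  have hsub : ((LF F n) ×ˢ (LF F m)).image Φ ⊆
      LF F (n+m) ∪ (FFk F (n+m)).biUnion (fun f => (Finset.range n).biUnion (fun i =>
        if n+1 ≤ i + f.length ∧ i + f.length ≤ n+m then
          ((LF F i) ×ˢ (LF F (n+m-f.length-i))).image (fun p => p.1 ++ f ++ p.2) else ∅)) := by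
    intro x hx
    simp only [mem_image, mem_product] at hx
    obtain ⟨⟨u, v⟩, ⟨hu, hv⟩, rfl⟩ := hx
    have humem : u ∈ langN F n := mem_LF.1 hu
    have hvmem : v ∈ langN F m := mem_LF.1 hv
    by_cases hgood : Φ (u, v) ∈ langN F (n+m)
    · exact mem_union_left _ (mem_LF.2 hgood)
    · have hlen : (u ++ v).length = n + m := by simp [humem.1, hvmem.1]
      have hex : ∃ f ∈ F, f <:+: (u ++ v) := by
        by_contra hcon
        push_neg at hcon
        exact hgood ⟨hlen, fun f hf => hcon f hf⟩
      obtain ⟨f, hfF, s, t, hst⟩ := hex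
      have hfpos : 1 ≤ f.length := List.length_pos_iff.2 (hF f hfF)
      have hulen : u.length = n := humem.1
      have hvlen : v.length = m := hvmem.1
      have htot : s.length + f.length + t.length = n + m := by
        have h := congrArg List.length hst
        simp at h
        omega
      have hspref : s <+: u ++ v := ⟨f ++ t, by rw [← hst]; simp [List.append_assoc]⟩
      have hsfpref : s ++ f <+: u ++ v := ⟨t, by rw [← hst]⟩
      have htsuf : t <:+ u ++ v := ⟨s ++ f, hst⟩
      have hslt : s.length < n := by
        by_contra hge
        push_neg at hge
        have hup : u <+: s :=
          List.prefix_of_prefix_length_le ⟨v, rfl⟩ hspref (by omega)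
        obtain ⟨s', rfl⟩ := hup
        have : s' ++ f ++ t = v := by
          have h2 : u ++ (s' ++ f ++ t) = u ++ v := by rw [← hst]; simp [List.append_assoc]
          exact List.append_cancel_left h2
        exact absurd ⟨s', t, this⟩ (hvmem.2 f hfF)
      have hcross : n + 1 ≤ s.length + f.length := by
        by_contra hle
        push_neg at hle
        have hsfu : s ++ f <+: u := by
          refine List.prefix_of_prefix_length_le hsfpref ⟨v, rfl⟩ ?_
          simp only [List.length_append]
          omega
        exact absurd ((List.suffix_append s f).isInfix.trans hsfu.isInfix) (humem.2 f hfF)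
      have hble : s.length + f.length ≤ n + m := by omega
      have hsu : s <+: u := by
        refine List.prefix_of_prefix_length_le hspref ⟨v, rfl⟩ ?_
        omega
      have hsmem : s ∈ langN F s.length := mem_langN_of_infix humem hsu.isInfix
      have htv : t <:+ v := by
        refine List.suffix_of_suffix_length_le htsuf ⟨u, rfl⟩ ?_
        omega
      have htmem : t ∈ langN F t.length := mem_langN_of_infix hvmem htv.isInfix
      refine mem_union_right _ (mem_biUnion.2 ⟨f, mem_FFk.2 ⟨hfF, by omega⟩, ?_⟩)
      refine mem_biUnion.2 ⟨s.length, mem_range.2 hslt, ?_⟩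
      rw [if_pos ⟨hcross, hble⟩]
      refine mem_image.2 ⟨(s, t), mem_product.2 ⟨mem_LF.2 hsmem, mem_LF.2 ?_⟩, hst⟩
      have he : t.length = n + m - f.length - s.length := by omega
      rw [← he]; exact htmem
  calc (LF F n).card * (LF F m).card
      = ((LF F n) ×ˢ (LF F m)).card := (card_product _ _).symm
    _ = (((LF F n) ×ˢ (LF F m)).image Φ).card := (card_image_of_injOn hinj).symm
    _ ≤ (LF F (n+m) ∪ (FFk F (n+m)).biUnion (fun f => (Finset.range n).biUnion (fun i =>
          if n+1 ≤ i + f.length ∧ i + f.length ≤ n+m then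
            ((LF F i) ×ˢ (LF F (n+m-f.length-i))).image (fun p => p.1 ++ f ++ p.2)
          else ∅))).card := card_le_card hsub
    _ ≤ (LF F (n+m)).card + ((FFk F (n+m)).biUnion (fun f => (Finset.range n).biUnion (fun i =>
          if n+1 ≤ i + f.length ∧ i + f.length ≤ n+m then
            ((LF F i) ×ˢ (LF F (n+m-f.length-i))).image (fun p => p.1 ++ f ++ p.2)
          else ∅))).card := card_union_le _ _
    _ ≤ (LF F (n+m)).card + ∑ f ∈ FFk F (n+m), ((Finset.range n).biUnion (fun i =>
          if n+1 ≤ i + f.length ∧ i + f.length ≤ n+m then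
            ((LF F i) ×ˢ (LF F (n+m-f.length-i))).image (fun p => p.1 ++ f ++ p.2)
          else ∅)).card := add_le_add le_rfl card_biUnion_le
    _ ≤ (LF F (n+m)).card + ∑ f ∈ FFk F (n+m), ∑ i ∈ Finset.range n,
          ((if n+1 ≤ i + f.length ∧ i + f.length ≤ n+m then
            ((LF F i) ×ˢ (LF F (n+m-f.length-i))).image (fun p => p.1 ++ f ++ p.2)
          else ∅)).card :=
        add_le_add le_rfl (sum_le_sum fun f _ => card_biUnion_le)
    _ ≤ (LF F (n+m)).card + ∑ f ∈ FFk F (n+m), ∑ i ∈ Finset.range n,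
          (if n+1 ≤ i + f.length ∧ i + f.length ≤ n+m then
            (LF F i).card * (LF F (n+m-f.length-i)).card else 0) := by
        refine add_le_add le_rfl (sum_le_sum fun f _ => sum_le_sum fun i _ => ?_)
        split_ifs
        · exact card_image_le.trans (le_of_eq (card_product _ _))
        · simp

lemma finsum_le_tsum (g : List A → ℝ) (hg : ∀ f : F, 0 ≤ g f)
    (hsum : Summable fun f : F => g (f : List A)) (s : Finset (List A)) (hs : ∀ f ∈ s, f ∈ F) :
    ∑ f ∈ s, g f ≤ ∑' f : F, g (f : List A) := by
  classical
  have hinj : Function.Injective (fun x : {x // x ∈ s} => (⟨x.1, hs x.1 x.2⟩ : F)) := by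
    intro x y h
    simp only [Subtype.mk.injEq] at h
    exact Subtype.ext h
  have he : ∑ f ∈ s, g f = ∑ x ∈ s.attach.image (fun x => (⟨x.1, hs x.1 x.2⟩ : F)),
      g (x : List A) := by
    rw [Finset.sum_image (fun x _ y _ h => hinj h)]
    rw [Finset.sum_attach]
  rw [he]
  exact sum_le_hasSum _ (fun f _ => hg f) hsum.hasSum

lemma zpow_one_sub_le {a b : ℝ} (ha : 0 < a) (hab : a ≤ b) (l : ℕ) (hl : 1 ≤ l) :
    b ^ ((1:ℤ) - l) ≤ a ^ ((1:ℤ) - l) := by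
  have hb : 0 < b := lt_of_lt_of_le ha hab
  have hk : ((1:ℤ) - l) = -((l - 1 : ℕ) : ℤ) := by push_cast; omega
  rw [hk, zpow_neg, zpow_neg, zpow_natCast, zpow_natCast]
  exact inv_anti₀ (by positivity) (pow_le_pow_left₀ ha.le hab _)

lemma chain_of_step {μ : ℝ} (hμ : 0 ≤ μ) {N : ℕ}
    (hstep : ∀ k, k + 1 ≤ N → μ * Lr F k ≤ Lr F (k+1)) :
    ∀ d k, k + d ≤ N → μ^d * Lr F k ≤ Lr F (k+d) := by
  intro d
  induction d with
  | zero => intro k _; simp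
  | succ d ih =>
    intro k hk
    have h1 : μ^d * Lr F k ≤ Lr F (k+d) := ih k (by omega)
    calc μ^(d+1) * Lr F k = μ * (μ^d * Lr F k) := by ring
      _ ≤ μ * Lr F (k+d) := mul_le_mul_of_nonneg_left h1 hμ
      _ ≤ Lr F (k+d+1) := hstep (k+d) (by omega)

lemma improve' (hF : ∀ f ∈ F, f ≠ ([] : List A)) {β μ : ℝ} (hβ : 1 < β) (hμβ : β ≤ μ)
    (hsumβ : Summable fun f : F => β ^ ((1:ℤ) - ((f : List A).length : ℤ))) {N : ℕ}
    (hstep : ∀ k, k + 1 ≤ N → μ * Lr F k ≤ Lr F (k+1)) :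
    ((Fintype.card A : ℝ) - ∑' f : F, μ ^ ((1:ℤ) - ((f : List A).length : ℤ))) * Lr F N
      ≤ Lr F (N+1) := by
  have hμ0 : (0:ℝ) < μ := lt_of_lt_of_le (lt_trans one_pos hβ) hμβ
  have hβ0 : (0:ℝ) < β := lt_trans one_pos hβ
  have hsumμ : Summable fun f : F => μ ^ ((1:ℤ) - ((f : List A).length : ℤ)) := by
    refine Summable.of_nonneg_of_le (fun f => (zpow_pos hμ0 _).le) (fun f => ?_) hsumβ
    exact zpow_one_sub_le hβ0 hμβ _ (List.length_pos_iff.2 (hF f f.2))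
  have hCI : Lr F N * (Fintype.card A : ℝ) ≤
      Lr F (N+1) + ∑ f ∈ FFk F (N+1), Lr F (N + 1 - f.length) := by
    have h := counting hF N
    have h2 := (Nat.cast_le (α := ℝ)).2 h
    push_cast at h2
    simpa [Lr] using h2
  have hterm : ∀ f ∈ FFk F (N+1),
      Lr F (N + 1 - f.length) ≤ μ ^ ((1:ℤ) - (f.length : ℤ)) * Lr F N := by
    intro f hf
    obtain ⟨hfF, hfle⟩ := mem_FFk.1 hf
    have hfpos : 1 ≤ f.length := List.length_pos_iff.2 (hF f hfF)
    have hchain := chain_of_step hμ0.le hstep (f.length - 1) (N + 1 - f.length)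
      (by omega)
    have heq : N + 1 - f.length + (f.length - 1) = N := by omega
    rw [heq] at hchain
    have hz : μ ^ ((1:ℤ) - (f.length : ℤ)) = (μ ^ (f.length - 1))⁻¹ := by
      have hk : ((1:ℤ) - f.length) = -((f.length - 1 : ℕ) : ℤ) := by push_cast; omega
      rw [hk, zpow_neg, zpow_natCast]
    rw [hz, ← div_eq_inv_mul, le_div_iff₀ (by positivity)]
    linarith [hchain]
  have hsum_le : ∑ f ∈ FFk F (N+1), Lr F (N + 1 - f.length) ≤
      (∑' f : F, μ ^ ((1:ℤ) - ((f : List A).length : ℤ))) * Lr F N := by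
    calc ∑ f ∈ FFk F (N+1), Lr F (N + 1 - f.length)
        ≤ ∑ f ∈ FFk F (N+1), μ ^ ((1:ℤ) - (f.length : ℤ)) * Lr F N :=
          sum_le_sum hterm
      _ = (∑ f ∈ FFk F (N+1), μ ^ ((1:ℤ) - (f.length : ℤ))) * Lr F N := by
          rw [Finset.sum_mul]
      _ ≤ (∑' f : F, μ ^ ((1:ℤ) - ((f : List A).length : ℤ))) * Lr F N := by
          refine mul_le_mul_of_nonneg_right ?_ (Lr_nonneg F N)
          exact finsum_le_tsum _ (fun f => (zpow_pos hμ0 _).le) hsumμ _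
            (fun f hf => (mem_FFk.1 hf).1)
  nlinarith [hCI, hsum_le, Lr_nonneg F N]

lemma key_ineq {b l : ℝ} (hb : 1 < b) (hbl : b ≤ l) (k : ℕ) :
    (l - b) * ((k:ℝ) * l ^ (-(k+1:ℤ))) ≤ b ^ (-(k:ℤ)) - l ^ (-(k:ℤ)) := by
  have hb0 : (0:ℝ) < b := lt_trans one_pos hb
  have hl0 : (0:ℝ) < l := lt_of_lt_of_le hb0 hbl
  rcases Nat.eq_zero_or_pos k with rfl | hk
  · simp
  have hgeom : l^k - b^k = (∑ i ∈ range k, l^i * b^(k-1-i)) * (l - b) :=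
    (geom_sum₂_mul l b k).symm
  have hsum_ge : (k : ℝ) * b^(k-1) ≤ ∑ i ∈ range k, l^i * b^(k-1-i) := by
    calc (k:ℝ) * b^(k-1) = ∑ _i ∈ range k, b^(k-1) := by
          rw [Finset.sum_const, card_range, nsmul_eq_mul]
      _ ≤ ∑ i ∈ range k, l^i * b^(k-1-i) := by
          refine sum_le_sum fun i hi => ?_
          have hik : i < k := mem_range.1 hi
          have hsplit : b^(k-1) = b^i * b^(k-1-i) := by
            rw [← pow_add]; congr 1; omega
          rw [hsplit]
          exact mul_le_mul_of_nonneg_right (pow_le_pow_left₀ hb0.le hbl i) (by positivity)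
  have hdiffge : (l - b) * ((k:ℝ) * b^(k-1)) ≤ l^k - b^k := by
    rw [hgeom, mul_comm]
    exact mul_le_mul_of_nonneg_right hsum_ge (by linarith)
  have hz1 : l ^ (-(k+1:ℤ)) = (l^(k+1))⁻¹ := by
    rw [← zpow_natCast l (k+1), ← zpow_neg]; norm_num
  have hz2 : b ^ (-(k:ℤ)) = (b^k)⁻¹ := by
    rw [← zpow_natCast b k, ← zpow_neg]
  have hz3 : l ^ (-(k:ℤ)) = (l^k)⁻¹ := by
    rw [← zpow_natCast l k, ← zpow_neg]
  rw [hz1, hz2, hz3]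
  have hrhs : (b^k)⁻¹ - (l^k)⁻¹ = (l^k - b^k) * ((b^k)⁻¹ * (l^k)⁻¹) := by
    field_simp
  rw [hrhs]
  have hstep1 : (l - b) * ((k:ℝ) * (l^(k+1))⁻¹) ≤
      (l - b) * ((k:ℝ) * b^(k-1)) * ((b^k)⁻¹ * (l^k)⁻¹) := by
    have hbk : b^k = b^(k-1) * b := by
      rw [← pow_succ]; congr 1; omega
    have hkey : (l^(k+1))⁻¹ ≤ b^(k-1) * ((b^k)⁻¹ * (l^k)⁻¹) := by
      rw [hbk, mul_inv]
      have he : b^(k-1) * ((b^(k-1))⁻¹ * b⁻¹ * (l^k)⁻¹) = (b * l^k)⁻¹ := by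
        field_simp
      rw [he]
      refine inv_anti₀ (by positivity) ?_
      calc b * l^k ≤ l * l^k := mul_le_mul_of_nonneg_right hbl (by positivity)
        _ = l^(k+1) := by ring
    calc (l - b) * ((k:ℝ) * (l^(k+1))⁻¹)
        ≤ (l - b) * ((k:ℝ) * (b^(k-1) * ((b^k)⁻¹ * (l^k)⁻¹))) := by
          refine mul_le_mul_of_nonneg_left ?_ (by linarith)
          exact mul_le_mul_of_nonneg_left hkey (by positivity)
      _ = (l - b) * ((k:ℝ) * b^(k-1)) * ((b^k)⁻¹ * (l^k)⁻¹) := by ring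
  refine hstep1.trans ?_
  exact mul_le_mul_of_nonneg_right hdiffge (by positivity)

lemma base (hF : ∀ f ∈ F, f ≠ ([] : List A)) {β : ℝ} (hβ : 1 < β)
    (hsum : Summable fun f : F => β ^ ((1:ℤ) - ((f : List A).length : ℤ)))
    (hcond : β + ∑' f : F, β ^ ((1 : ℤ) - ((f : List A).length : ℤ)) < (Fintype.card A : ℝ)) :
    ∀ N, ((Fintype.card A : ℝ) - ∑' f : F, β ^ ((1:ℤ) - ((f : List A).length : ℤ))) * Lr F N
      ≤ Lr F (N+1) := by
  intro N
  induction N using Nat.strong_induction_on with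
  | _ N ih =>
    refine improve' hF hβ le_rfl hsum ?_
    intro k hk
    have h := ih k (by omega)
    have hle : β ≤ (Fintype.card A : ℝ) - ∑' f : F, β ^ ((1:ℤ) - ((f : List A).length : ℤ)) := by
      linarith
    calc β * Lr F k
        ≤ ((Fintype.card A : ℝ) - ∑' f : F, β ^ ((1:ℤ) - ((f : List A).length : ℤ))) * Lr F k :=
          mul_le_mul_of_nonneg_right hle (Lr_nonneg F k)
      _ ≤ Lr F (k+1) := h

lemma Lr_pos (hF : ∀ f ∈ F, f ≠ ([] : List A)) {β : ℝ} (hβ : 1 < β)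
    (hsum : Summable fun f : F => β ^ ((1:ℤ) - ((f : List A).length : ℤ)))
    (hcond : β + ∑' f : F, β ^ ((1 : ℤ) - ((f : List A).length : ℤ)) < (Fintype.card A : ℝ)) :
    ∀ n, 0 < Lr F n := by
  have hS0 : 0 ≤ ∑' f : F, β ^ ((1:ℤ) - ((f : List A).length : ℤ)) :=
    tsum_nonneg (fun f => (zpow_pos (by linarith) _).le)
  intro n
  induction n with
  | zero => rw [Lr_zero hF]; norm_num
  | succ n ih =>
    have h := base hF hβ hsum hcond n
    nlinarith

end Stmt2Aux

open Stmt2Aux Finset in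
/-- If there is `β > 1` with `|𝒜| > β + Σ_{f ∈ ℱ} β^(1-|f|)`, then there is a
constant `C > 0` with `|ℒ_{n+m}(𝒜,ℱ)| ≥ C · |ℒ_n(𝒜,ℱ)| · |ℒ_m(𝒜,ℱ)|` for all `n, m`. -/
theorem stmt2 {A : Type*} [Fintype A] (F : Set (List A))
    (hF : ∀ f ∈ F, f ≠ ([] : List A)) (β : ℝ) (hβ : 1 < β)
    (hsum : Summable fun f : F => β ^ ((1 : ℤ) - ((f : List A).length : ℤ)))
    (hcond : β + ∑' f : F, β ^ ((1 : ℤ) - ((f : List A).length : ℤ)) < (Fintype.card A : ℝ)) :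
    ∃ C : ℝ, 0 < C ∧ ∀ n m : ℕ,
      C * ((langN F n).ncard : ℝ) * ((langN F m).ncard : ℝ) ≤ ((langN F (n + m)).ncard : ℝ) := by
  classical
  set q : ℝ := (Fintype.card A : ℝ) with hqdef
  set S : ℝ := ∑' f : F, β ^ ((1:ℤ) - ((f : List A).length : ℤ)) with hSdef
  have hβ0 : (0:ℝ) < β := by linarith
  have hS0 : 0 ≤ S := tsum_nonneg (fun f => (zpow_pos hβ0 _).le)
  have hq : β + S < q := hcond
  have hbase : ∀ N, (q - S) * Lr F N ≤ Lr F (N+1) := base hF hβ hsum hcond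
  have hLpos : ∀ n, 0 < Lr F n := Lr_pos hF hβ hsum hcond
  set M : Set ℝ := {μ | β ≤ μ ∧ ∀ k, μ * Lr F k ≤ Lr F (k+1)} with hM
  have hmemqS : (q - S) ∈ M := ⟨by linarith, hbase⟩
  have hub : ∀ μ ∈ M, μ ≤ q := by
    intro μ hμ
    have h := hμ.2 0
    rw [Lr_zero hF, mul_one] at h
    exact h.trans Lr_one_le
  have hbdd : BddAbove M := ⟨q, fun μ hμ => hub μ hμ⟩
  have hne : M.Nonempty := ⟨q - S, hmemqS⟩
  set lam : ℝ := sSup M with hlam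
  have hlam_ge : q - S ≤ lam := le_csSup hbdd hmemqS
  have hlam_gtβ : β < lam := by linarith
  have hlam_le : lam ≤ q := csSup_le hne hub
  have hlam0 : (0:ℝ) < lam := by linarith
  have hlam_mem : lam ∈ M := by
    refine ⟨by linarith, fun k => ?_⟩
    have h1 : lam ≤ Lr F (k+1) / Lr F k :=
      csSup_le hne (fun μ hμ => (le_div_iff₀ (hLpos k)).2 (hμ.2 k))
    calc lam * Lr F k ≤ (Lr F (k+1) / Lr F k) * Lr F k :=
          mul_le_mul_of_nonneg_right h1 (hLpos k).le
      _ = Lr F (k+1) := div_mul_cancel₀ _ (hLpos k).ne'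
  have hsum_lam : Summable fun f : F => lam ^ ((1:ℤ) - ((f : List A).length : ℤ)) := by
    refine Summable.of_nonneg_of_le (fun f => (zpow_pos hlam0 _).le) (fun f => ?_) hsum
    exact zpow_one_sub_le hβ0 (by linarith) _ (List.length_pos_iff.2 (hF f f.2))
  have himp : (q - ∑' f : F, lam ^ ((1:ℤ) - ((f : List A).length : ℤ))) ∈ M := by
    constructor
    · have h : ∑' f : F, lam ^ ((1:ℤ) - ((f : List A).length : ℤ)) ≤ S := by
        rw [hSdef]
        exact Summable.tsum_le_tsum (fun f => zpow_one_sub_le hβ0 (by linarith) _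
          (List.length_pos_iff.2 (hF f f.2))) hsum_lam hsum
      linarith
    · intro k
      exact improve' hF hβ hlam_gtβ.le hsum (fun j _ => hlam_mem.2 j)
  have hfix : q - lam ≤ ∑' f : F, lam ^ ((1:ℤ) - ((f : List A).length : ℤ)) := by
    have h := le_csSup hbdd himp
    linarith
  -- the weight function
  set gw : List A → ℝ := fun f => ((f.length - 1 : ℕ) : ℝ) * lam ^ (-(f.length : ℤ)) with hgw
  have hgw_nonneg : ∀ f : List A, 0 ≤ gw f := by
    intro f
    exact mul_nonneg (Nat.cast_nonneg _) (zpow_pos hlam0 _).le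
  have hkey : ∀ f : F, (lam - β) * gw (f : List A) ≤
      β ^ ((1:ℤ) - ((f : List A).length : ℤ)) - lam ^ ((1:ℤ) - ((f : List A).length : ℤ)) := by
    intro f
    have hl1 : 1 ≤ (f : List A).length := List.length_pos_iff.2 (hF f f.2)
    have h := key_ineq hβ hlam_gtβ.le ((f : List A).length - 1)
    have e1 : (-((((f : List A).length - 1 : ℕ) : ℤ) + 1)) = -(((f : List A).length : ℤ)) := by
      push_cast; omega
    have e2 : (-(((f : List A).length - 1 : ℕ) : ℤ)) = (1:ℤ) - ((f : List A).length : ℤ) := by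
      push_cast; omega
    rw [e1, e2] at h
    exact h
  have hgap : (0:ℝ) < lam - β := by linarith
  have hsum_gw : Summable fun f : F => gw (f : List A) := by
    refine Summable.of_nonneg_of_le (fun f => hgw_nonneg _) (fun f => ?_)
      (hsum.mul_left (lam - β)⁻¹)
    have h := hkey f
    have h2 : (lam - β) * gw (f : List A) ≤ β ^ ((1:ℤ) - ((f : List A).length : ℤ)) := by
      have := (zpow_pos hlam0 ((1:ℤ) - ((f : List A).length : ℤ))).le
      linarith
    rw [inv_mul_eq_div, le_div_iff₀ hgap]
    linarith
  set T : ℝ := ∑' f : F, gw (f : List A) with hT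
  have hTsum : (lam - β) * T ≤ S - ∑' f : F, lam ^ ((1:ℤ) - ((f : List A).length : ℤ)) := by
    have h1 : (lam - β) * T = ∑' f : F, (lam - β) * gw (f : List A) := by
      rw [hT, tsum_mul_left]
    have h2 : ∑' f : F, (lam - β) * gw (f : List A) ≤
        ∑' f : F, (β ^ ((1:ℤ) - ((f : List A).length : ℤ))
          - lam ^ ((1:ℤ) - ((f : List A).length : ℤ))) :=
      Summable.tsum_le_tsum hkey (hsum_gw.mul_left _) (hsum.sub hsum_lam)
    have h3 : ∑' f : F, (β ^ ((1:ℤ) - ((f : List A).length : ℤ))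
        - lam ^ ((1:ℤ) - ((f : List A).length : ℤ)))
        = S - ∑' f : F, lam ^ ((1:ℤ) - ((f : List A).length : ℤ)) := by
      rw [hSdef]
      exact Summable.tsum_sub hsum hsum_lam
    linarith
  have hT2 : (lam - β) * T ≤ (lam - β) - (q - β - S) := by linarith
  have hg0 : (0:ℝ) < q - β - S := by linarith
  have hT3 : T ≤ 1 - (q - β - S) / (lam - β) := by
    have h4 : T ≤ ((lam - β) - (q - β - S)) / (lam - β) := by
      rw [le_div_iff₀ hgap]
      linarith [hT2, mul_comm T (lam - β)]
    have h5 : ((lam - β) - (q - β - S)) / (lam - β) = 1 - (q - β - S) / (lam - β) := by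
      field_simp
    linarith
  have hqβ : (0:ℝ) < q - β := by linarith
  set C : ℝ := (q - β - S) / (q - β) with hC
  have hC0 : 0 < C := div_pos hg0 hqβ
  have hdivle : (q - β - S) / (q - β) ≤ (q - β - S) / (lam - β) :=
    div_le_div_of_nonneg_left hg0.le hgap (by linarith)
  have hT4 : T ≤ 1 - C := by rw [hC]; linarith
  have hncard : ∀ k, ((langN F k).ncard : ℝ) = Lr F k := by
    intro k
    rw [Set.ncard_eq_toFinset_card _ (langN_finite F k)]
    rfl
  refine ⟨C, hC0, fun n m => ?_⟩
  rw [hncard, hncard, hncard]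
  -- real-valued crossing inequality
  have hcrossR : Lr F n * Lr F m ≤ Lr F (n+m) + ∑ f ∈ FFk F (n+m), ∑ i ∈ Finset.range n,
      (if n+1 ≤ i + f.length ∧ i + f.length ≤ n+m then
        Lr F i * Lr F (n+m-f.length-i) else 0) := by
    have h := crossing hF n m
    have h2 := (Nat.cast_le (α := ℝ)).2 h
    push_cast at h2
    simpa [Lr, apply_ite (fun x : ℕ => (x : ℝ))] using h2
  have hinner : ∀ f ∈ FFk F (n+m), ∑ i ∈ Finset.range n,
      (if n+1 ≤ i + f.length ∧ i + f.length ≤ n+m then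
        Lr F i * Lr F (n+m-f.length-i) else 0) ≤ gw f * (Lr F n * Lr F m) := by
    intro f hf
    obtain ⟨hfF, hfle⟩ := mem_FFk.1 hf
    have hfpos : 1 ≤ f.length := List.length_pos_iff.2 (hF f hfF)
    set X : ℝ := lam ^ (-(f.length : ℤ)) * (Lr F n * Lr F m) with hX
    have hX0 : 0 ≤ X :=
      mul_nonneg (zpow_pos hlam0 _).le (mul_nonneg (Lr_nonneg F n) (Lr_nonneg F m))
    have hterm : ∀ i ∈ Finset.range n,
        (if n+1 ≤ i + f.length ∧ i + f.length ≤ n+m then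
          Lr F i * Lr F (n+m-f.length-i) else 0) ≤
        (if n+1 ≤ i + f.length ∧ i + f.length ≤ n+m then X else 0) := by
      intro i hi
      split_ifs with hgd
      · obtain ⟨hg1, hg2⟩ := hgd
        have hi_n : i < n := mem_range.1 hi
        have c1 := chain_of_step (N := n) hlam0.le (fun k _ => hlam_mem.2 k) (n - i) i
          (by omega)
        rw [show i + (n-i) = n by omega] at c1
        set r : ℕ := n + m - f.length - i with hr
        have c2 := chain_of_step (N := m) hlam0.le (fun k _ => hlam_mem.2 k) (m - r) r
          (by omega)
        rw [show r + (m - r) = m by omega] at c2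
        have hmul : (lam^(n-i) * Lr F i) * (lam^(m-r) * Lr F r) ≤ Lr F n * Lr F m :=
          mul_le_mul c1 c2 (mul_nonneg (pow_nonneg hlam0.le _) (Lr_nonneg F r)) (Lr_nonneg F n)
        have hcollect : (lam^(n-i) * Lr F i) * (lam^(m-r) * Lr F r)
            = lam^((n-i)+(m-r)) * (Lr F i * Lr F r) := by
          rw [pow_add]; ring
        rw [hcollect, show (n-i)+(m-r) = f.length by omega] at hmul
        have hzz : lam ^ (-(f.length : ℤ)) = (lam ^ f.length)⁻¹ := by
          rw [← zpow_natCast lam f.length, ← zpow_neg]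
        rw [hX, hzz, ← div_eq_inv_mul, le_div_iff₀ (pow_pos hlam0 _)]
        calc Lr F i * Lr F r * lam ^ f.length = lam ^ f.length * (Lr F i * Lr F r) := by ring
          _ ≤ Lr F n * Lr F m := hmul
      · exact le_refl 0
    calc ∑ i ∈ Finset.range n, (if n+1 ≤ i + f.length ∧ i + f.length ≤ n+m then
          Lr F i * Lr F (n+m-f.length-i) else 0)
        ≤ ∑ i ∈ Finset.range n, (if n+1 ≤ i + f.length ∧ i + f.length ≤ n+m then X else 0) :=
          sum_le_sum hterm
      _ = ∑ i ∈ (Finset.range n).filter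
            (fun i => n+1 ≤ i + f.length ∧ i + f.length ≤ n+m), X := by
          rw [Finset.sum_filter]
      _ = (((Finset.range n).filter
            (fun i => n+1 ≤ i + f.length ∧ i + f.length ≤ n+m)).card : ℝ) * X := by
          rw [Finset.sum_const, nsmul_eq_mul]
      _ ≤ ((f.length - 1 : ℕ) : ℝ) * X := by
          refine mul_le_mul_of_nonneg_right ?_ hX0
          refine Nat.cast_le.2 ?_
          have hsubf : (Finset.range n).filter
              (fun i => n+1 ≤ i + f.length ∧ i + f.length ≤ n+m) ⊆
              Finset.Ico (n+1-f.length) n := by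
            intro i h
            simp only [mem_filter, mem_range, Finset.mem_Ico] at *
            omega
          calc ((Finset.range n).filter
                (fun i => n+1 ≤ i + f.length ∧ i + f.length ≤ n+m)).card
              ≤ (Finset.Ico (n+1-f.length) n).card := card_le_card hsubf
            _ = n - (n+1-f.length) := Nat.card_Ico _ _
            _ ≤ f.length - 1 := by omega
      _ = gw f * (Lr F n * Lr F m) := by rw [hgw, hX]; ring
  have htotal : ∑ f ∈ FFk F (n+m), ∑ i ∈ Finset.range n,
      (if n+1 ≤ i + f.length ∧ i + f.length ≤ n+m then
        Lr F i * Lr F (n+m-f.length-i) else 0) ≤ T * (Lr F n * Lr F m) := by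
    calc ∑ f ∈ FFk F (n+m), ∑ i ∈ Finset.range n,
          (if n+1 ≤ i + f.length ∧ i + f.length ≤ n+m then
            Lr F i * Lr F (n+m-f.length-i) else 0)
        ≤ ∑ f ∈ FFk F (n+m), gw f * (Lr F n * Lr F m) := sum_le_sum hinner
      _ = (∑ f ∈ FFk F (n+m), gw f) * (Lr F n * Lr F m) := by rw [Finset.sum_mul]
      _ ≤ T * (Lr F n * Lr F m) := by
          refine mul_le_mul_of_nonneg_right ?_
            (mul_nonneg (Lr_nonneg F n) (Lr_nonneg F m))
          rw [hT]
          exact finsum_le_tsum gw (fun f => hgw_nonneg _) hsum_gw _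
            (fun f hf => (mem_FFk.1 hf).1)
  have hfinal : Lr F n * Lr F m ≤ Lr F (n+m) + T * (Lr F n * Lr F m) :=
    hcrossR.trans (add_le_add le_rfl htotal)
  have hP0 : 0 ≤ Lr F n * Lr F m := mul_nonneg (Lr_nonneg F n) (Lr_nonneg F m)
  have hTP : T * (Lr F n * Lr F m) ≤ (1 - C) * (Lr F n * Lr F m) :=
    mul_le_mul_of_nonneg_right hT4 hP0
  nlinarith [hfinal, hTP, hP0]
end

section
/- Let 𝒜 be a finite alphabet and ℱ ⊆ 𝒜⁺ a set of forbidden factors. Suppose there exists a real β ≥ 1 such that β + Σ_{f∈ℱ} β^{1−|f|} < |𝒜|. Then there exists a constant C > 0 such that for all n ≥ 0, α(𝒜,ℱ)^n ≤ |ℒ_n(𝒜,ℱ)| ≤ C^{−1}·α(𝒜,ℱ)^n. -/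
open Filter

set_option linter.unusedSectionVars false
namespace Stmt5Aux

lemma ncard_prod {α β : Type*} (s : Set α) (t : Set β) :
    (s ×ˢ t).ncard = s.ncard * t.ncard := by
  rw [← Nat.card_coe_set_eq, ← Nat.card_coe_set_eq, ← Nat.card_coe_set_eq,
    ← Nat.card_prod]
  exact Nat.card_congr (Equiv.Set.prod s t)

lemma ncard_biUnion_le {α ι : Type*} (s : Finset ι) (t : ι → Set α)
    (ht : ∀ i ∈ s, (t i).Finite) :
    (⋃ i ∈ s, t i).ncard ≤ ∑ i ∈ s, (t i).ncard := by
  classical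
  induction s using Finset.induction with
  | empty => simp
  | @insert j s hj ih =>
    rw [Finset.set_biUnion_insert, Finset.sum_insert hj]
    exact le_trans (Set.ncard_union_le _ _)
      (Nat.add_le_add le_rfl (ih fun i hi => ht i (Finset.mem_insert_of_mem hi)))

lemma crossing {A : Type*} {f u v : List A} (h : f <:+: u ++ v) (hu : ¬ f <:+: u)
    (hv : ¬ f <:+: v) :
    ∃ w z : List A, f = w ++ z ∧ w ≠ [] ∧ z ≠ [] ∧ w <:+ u ∧ z <+: v := by
  obtain ⟨p, q, hpq⟩ := h
  rw [List.append_assoc] at hpq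
  rcases List.append_eq_append_iff.1 hpq with ⟨a, ha, hfq⟩ | ⟨c, hc, hvc⟩
  · rcases List.append_eq_append_iff.1 hfq with ⟨b, hb, hq⟩ | ⟨z, hz, hvz⟩
    · exact absurd ⟨p, b, by simp [ha, hb]⟩ hu
    · refine ⟨a, z, hz, ?_, ?_, ⟨p, ha.symm⟩, ⟨q, hvz.symm⟩⟩
      · rintro rfl
        exact hv ⟨[], q, by simp [hvz, hz]⟩
      · rintro rfl
        exact hu ⟨p, [], by simp [ha, hz]⟩
  · exact absurd ⟨c, q, by simp [hvc]⟩ hv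

variable {A : Type*} [Fintype A] {F : Set (List A)}

lemma langN_finite (F : Set (List A)) (n : ℕ) : (langN F n).Finite :=
  (List.finite_length_eq A n).subset fun _ hw => hw.1

noncomputable def aN (F : Set (List A)) (n : ℕ) : ℕ := (langN F n).ncard

noncomputable def Ffin (F : Set (List A)) (m : ℕ) : Finset ↥F :=
  (((List.finite_length_le A m).preimage
    (Set.injOn_of_injective Subtype.val_injective)).toFinset)

lemma mem_Ffin {f : ↥F} {m : ℕ} : f ∈ Ffin F m ↔ (f : List A).length ≤ m := by
  simp [Ffin]

lemma langN_infix {w u : List A} {n : ℕ} (hw : w ∈ langN F n) (h : u <:+: w) :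
    u ∈ langN F u.length := ⟨rfl, fun f hf hfu => hw.2 f hf (hfu.trans h)⟩

lemma take_mem_langN {w : List A} {n j : ℕ} (hw : w ∈ langN F n) (hj : j ≤ n) :
    w.take j ∈ langN F j := by
  have h := langN_infix hw (w.take_prefix j).isInfix
  rwa [List.length_take, hw.1, min_eq_left hj] at h

lemma aN_zero (hF : ∀ f ∈ F, f ≠ ([] : List A)) : aN F 0 = 1 := by
  have : langN F 0 = {([] : List A)} := by
    ext w
    simp only [langN, Set.mem_setOf_eq, List.length_eq_zero_iff, Set.mem_singleton_iff]
    constructor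
    · rintro ⟨rfl, -⟩; rfl
    · rintro rfl
      refine ⟨rfl, fun f hf hfw => hF f hf ?_⟩
      exact List.sublist_nil.mp hfw.sublist
  rw [aN, this, Set.ncard_singleton]

/-- The set of words of length `n+1` ending in the forbidden factor `f`
whose long proper prefix is admissible. -/
def Bad (F : Set (List A)) (n : ℕ) (f : ↥F) : Set (List A) :=
  {u | u.length = n + 1 ∧ u.take (n + 1 - (f : List A).length) ∈
    langN F (n + 1 - (f : List A).length) ∧ (f : List A) <:+ u}

lemma Bad_finite (F : Set (List A)) (n : ℕ) (f : ↥F) : (Bad F n f).Finite :=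
  (List.finite_length_eq A (n + 1)).subset fun _ hw => hw.1

lemma Bad_ncard (F : Set (List A)) (n : ℕ) (f : ↥F) :
    (Bad F n f).ncard ≤ aN F (n + 1 - (f : List A).length) := by
  classical
  set j := n + 1 - (f : List A).length with hj
  have himg : (fun u : List A => u.take j) '' Bad F n f ⊆ langN F j := by
    rintro x ⟨u, hu, rfl⟩
    exact hu.2.1
  have hkey : ∀ u ∈ Bad F n f, u = u.take j ++ (f : List A) := by
    rintro u ⟨hlen, -, t, ht⟩
    have htl : t.length = j := by
      have := congrArg List.length ht
      simp only [List.length_append] at this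
      omega
    rw [← ht, ← htl, List.take_left]
  have hinj : Set.InjOn (fun u : List A => u.take j) (Bad F n f) := by
    intro u₁ h₁ u₂ h₂ h
    have h' : u₁.take j = u₂.take j := h
    calc u₁ = u₁.take j ++ (f : List A) := hkey u₁ h₁
      _ = u₂.take j ++ (f : List A) := by rw [h']
      _ = u₂ := (hkey u₂ h₂).symm
  calc (Bad F n f).ncard = ((fun u : List A => u.take j) '' Bad F n f).ncard :=
        (Set.ncard_image_of_injOn hinj).symm
    _ ≤ aN F j := Set.ncard_le_ncard himg (langN_finite F j)

lemma f_eq_singleton {f : List A} {a : A} (hne : f ≠ []) (h : f <:+: [a]) : f = [a] := by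
  rcases f with _ | ⟨b, f'⟩
  · exact absurd rfl hne
  · have hs := h.sublist
    have hlen : f'.length + 1 ≤ 1 := by simpa using hs.length_le
    have hf' : f' = [] := List.eq_nil_of_length_eq_zero (by omega)
    subst hf'
    have hb : b ∈ [a] := List.singleton_sublist.mp hs
    simp only [List.mem_singleton] at hb
    rw [hb]

lemma suffix_of_last {w : List A} {x : A} {f : List A} (hne : f ≠ [])
    (h : f <:+: w ++ [x]) (hw : ¬ f <:+: w) : f <:+ w ++ [x] := by
  by_cases hx : f <:+: [x]
  · rw [f_eq_singleton hne hx]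
    exact ⟨w, rfl⟩
  · obtain ⟨w', z, hfwz, hw'ne, hzne, hsuf, hpre⟩ := crossing h hw hx
    have hz : z = [x] := f_eq_singleton hzne hpre.isInfix
    obtain ⟨t, ht⟩ := hsuf
    exact ⟨t, by rw [hfwz, hz, ← List.append_assoc, ht]⟩

lemma ext_count (hF : ∀ f ∈ F, f ≠ ([] : List A)) (n : ℕ) :
    Fintype.card A * aN F n ≤
      aN F (n + 1) + ∑ f ∈ Ffin F (n + 1), aN F (n + 1 - (f : List A).length) := by
  classical
  have hcov : (fun p : List A × A => p.1 ++ [p.2]) '' ((langN F n) ×ˢ (Set.univ : Set A)) ⊆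
      langN F (n + 1) ∪ ⋃ f ∈ Ffin F (n + 1), Bad F n f := by
    rintro u ⟨⟨w, x⟩, ⟨hw, -⟩, rfl⟩
    simp only [Set.mem_union]
    have hlen : (w ++ [x]).length = n + 1 := by
      simp [hw.1]
    by_cases hu : ∀ f ∈ F, ¬ f <:+: w ++ [x]
    · exact Or.inl ⟨hlen, hu⟩
    · push_neg at hu
      obtain ⟨f, hfF, hfinf⟩ := hu
      have hfne := hF f hfF
      have hsuf : f <:+ w ++ [x] := suffix_of_last hfne hfinf (hw.2 f hfF)
      have hflen : f.length ≤ n + 1 := by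
        have := hsuf.length_le
        omega
      refine Or.inr (Set.mem_biUnion (mem_Ffin.mpr hflen : (⟨f, hfF⟩ : ↥F) ∈ _) ?_)
      refine ⟨hlen, ?_, hsuf⟩
      have hfpos : 1 ≤ f.length := List.length_pos_iff.mpr hfne
      have hwlen : w.length = n := hw.1
      have hje : n + 1 - f.length ≤ n := by omega
      have : (w ++ [x]).take (n + 1 - f.length) = w.take (n + 1 - f.length) := by
        rw [List.take_append_of_le_length (by omega : n + 1 - f.length ≤ w.length)]
      rw [this]
      exact take_mem_langN hw hje
  have hinj : Set.InjOn (fun p : List A × A => p.1 ++ [p.2])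
      ((langN F n) ×ˢ (Set.univ : Set A)) := by
    rintro ⟨w₁, x₁⟩ - ⟨w₂, x₂⟩ - h
    have h' : w₁ ++ [x₁] = w₂ ++ [x₂] := h
    obtain ⟨h1, h2⟩ := List.append_inj' h' rfl
    simp only [List.cons.injEq] at h2
    simp [h1, h2.1]
  have hfin : (langN F (n + 1) ∪ ⋃ f ∈ Ffin F (n + 1), Bad F n f).Finite :=
    (langN_finite F (n + 1)).union
      (Set.Finite.biUnion (Ffin F (n + 1)).finite_toSet fun f _ => Bad_finite F n f)
  calc Fintype.card A * aN F n
      = ((langN F n) ×ˢ (Set.univ : Set A)).ncard := by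
        rw [ncard_prod, Set.ncard_univ, Nat.card_eq_fintype_card, mul_comm]
        rfl
    _ = ((fun p : List A × A => p.1 ++ [p.2]) '' ((langN F n) ×ˢ (Set.univ : Set A))).ncard :=
        (Set.ncard_image_of_injOn hinj).symm
    _ ≤ (langN F (n + 1) ∪ ⋃ f ∈ Ffin F (n + 1), Bad F n f).ncard :=
        Set.ncard_le_ncard hcov hfin
    _ ≤ (langN F (n + 1)).ncard + (⋃ f ∈ Ffin F (n + 1), Bad F n f).ncard :=
        Set.ncard_union_le _ _
    _ ≤ aN F (n + 1) + ∑ f ∈ Ffin F (n + 1), (Bad F n f).ncard :=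
        Nat.add_le_add le_rfl (ncard_biUnion_le _ _ fun f _ => Bad_finite F n f)
    _ ≤ _ := Nat.add_le_add le_rfl (Finset.sum_le_sum fun f _ => Bad_ncard F n f)

lemma geom_of_step {c : ℝ} (hc0 : 0 ≤ c) (a : ℕ → ℕ) {n : ℕ}
    (h : ∀ m < n, c * a m ≤ a (m + 1)) :
    ∀ i ≤ n, ∀ j ≤ i, c ^ (i - j) * (a j : ℝ) ≤ a i := by
  intro i hi
  induction i with
  | zero => intro j hj; interval_cases j; simp
  | succ i ih =>
    intro j hj
    rcases Nat.eq_or_lt_of_le hj with rfl | hj'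
    · simp
    · have hj'' : j ≤ i := by omega
      have h1 := ih (by omega) j hj''
      have h2 := h i (by omega)
      have he : c ^ (i + 1 - j) = c * c ^ (i - j) := by
        rw [← pow_succ']
        congr 1
        omega
      rw [he, mul_assoc]
      calc c * (c ^ (i - j) * (a j : ℝ)) ≤ c * a i := mul_le_mul_of_nonneg_left h1 hc0
        _ ≤ a (i + 1) := h2

lemma growth (hF : ∀ f ∈ F, f ≠ ([] : List A)) {c : ℝ} (hc1 : 1 ≤ c)
    (hsum : Summable fun f : F => c ^ ((1 : ℤ) - ((f : List A).length : ℤ)))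
    (hle : c + ∑' f : F, c ^ ((1 : ℤ) - ((f : List A).length : ℤ)) ≤ (Fintype.card A : ℝ)) :
    ∀ n, c * aN F n ≤ aN F (n + 1) := by
  have hc0 : (0 : ℝ) ≤ c := le_trans zero_le_one hc1
  have hcpos : (0 : ℝ) < c := lt_of_lt_of_le zero_lt_one hc1
  intro n
  induction n using Nat.strong_induction_on with
  | _ n ih =>
  have hgeom := geom_of_step hc0 (aN F) ih
  have hnat := ext_count (F := F) hF n
  have hcast : (Fintype.card A : ℝ) * aN F n ≤
      (aN F (n + 1) : ℝ) + ∑ f ∈ Ffin F (n + 1), (aN F (n + 1 - (f : List A).length) : ℝ) := by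
    exact_mod_cast hnat
  have hterm : ∀ f ∈ Ffin F (n + 1), (aN F (n + 1 - (f : List A).length) : ℝ) ≤
      (aN F n : ℝ) * c ^ ((1 : ℤ) - ((f : List A).length : ℤ)) := by
    intro f hf
    have hlen : (f : List A).length ≤ n + 1 := mem_Ffin.mp hf
    have hpos : 1 ≤ (f : List A).length := List.length_pos_iff.mpr (hF _ f.2)
    set L := (f : List A).length with hL
    have h1 := hgeom n le_rfl (n + 1 - L) (by omega)
    have he : n - (n + 1 - L) = L - 1 := by omega
    rw [he] at h1
    have hcpow : (0 : ℝ) < c ^ (L - 1) := pow_pos hcpos _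
    have hz : c ^ ((1 : ℤ) - (L : ℤ)) = (c ^ (L - 1 : ℕ))⁻¹ := by
      rw [← zpow_natCast c (L - 1), ← zpow_neg]
      congr 1
      push_cast
      omega
    rw [hz, ← div_eq_mul_inv, le_div_iff₀ hcpow]
    nlinarith [h1]
  have hsum3 : ∑ f ∈ Ffin F (n + 1), c ^ ((1 : ℤ) - ((f : List A).length : ℤ)) ≤
      ∑' f : F, c ^ ((1 : ℤ) - ((f : List A).length : ℤ)) :=
    Summable.sum_le_tsum _ (fun f _ => zpow_nonneg hc0 _) hsum
  have h4 : ∑ f ∈ Ffin F (n + 1), (aN F (n + 1 - (f : List A).length) : ℝ) ≤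
      (aN F n : ℝ) * ((Fintype.card A : ℝ) - c) := by
    calc ∑ f ∈ Ffin F (n + 1), (aN F (n + 1 - (f : List A).length) : ℝ)
        ≤ ∑ f ∈ Ffin F (n + 1), (aN F n : ℝ) * c ^ ((1 : ℤ) - ((f : List A).length : ℤ)) :=
          Finset.sum_le_sum hterm
      _ = (aN F n : ℝ) * ∑ f ∈ Ffin F (n + 1), c ^ ((1 : ℤ) - ((f : List A).length : ℤ)) := by
          rw [Finset.mul_sum]
      _ ≤ (aN F n : ℝ) * ((Fintype.card A : ℝ) - c) := by
          apply mul_le_mul_of_nonneg_left _ (Nat.cast_nonneg _)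
          exact le_trans hsum3 (by linarith)
  nlinarith [hcast, h4]

lemma one_le_aN (hF : ∀ f ∈ F, f ≠ ([] : List A)) {c : ℝ} (hc1 : 1 ≤ c)
    (hstep : ∀ n, c * aN F n ≤ aN F (n + 1)) : ∀ n, 1 ≤ aN F n := by
  intro n
  induction n with
  | zero => rw [aN_zero hF]
  | succ n ih =>
    have h1 := hstep n
    have h2 : (1 : ℝ) ≤ aN F (n + 1) := by
      have : (1 : ℝ) ≤ (aN F n : ℝ) := by exact_mod_cast ih
      nlinarith
    exact_mod_cast h2

/-- Pairs of admissible words where a forbidden factor `f` straddles the boundary,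
with exactly `s` letters in the first word. -/
def Bad2 (F : Set (List A)) (m n : ℕ) (f : ↥F) (s : ℕ) : Set (List A × List A) :=
  {p | p.1 ∈ langN F m ∧ p.2 ∈ langN F n ∧
    (f : List A).take s <:+ p.1 ∧ (f : List A).drop s <+: p.2}

lemma Bad2_finite (F : Set (List A)) (m n : ℕ) (f : ↥F) (s : ℕ) : (Bad2 F m n f s).Finite :=
  ((langN_finite F m).prod (langN_finite F n)).subset fun p hp => ⟨hp.1, hp.2.1⟩

lemma Bad2_ncard (F : Set (List A)) (m n : ℕ) (f : ↥F) {s : ℕ} (hs : s ≤ (f : List A).length)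
    (hsm : s ≤ m) (hsn : (f : List A).length - s ≤ n) :
    (Bad2 F m n f s).ncard ≤ aN F (m - s) * aN F (n - ((f : List A).length - s)) := by
  classical
  set L := (f : List A).length with hL
  set t := L - s with ht
  have hkey1 : ∀ p ∈ Bad2 F m n f s, p.1 = p.1.take (m - s) ++ (f : List A).take s := by
    rintro ⟨u, v⟩ ⟨hu, hv, ⟨r, hr⟩, -⟩
    have hrl : r.length = m - s := by
      have h1 := congrArg List.length hr
      have h2 : u.length = m := hu.1
      simp only [List.length_append, List.length_take] at h1
      omega
    rw [← hr, ← hrl, List.take_left]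
  have hkey2 : ∀ p ∈ Bad2 F m n f s, p.2 = (f : List A).drop s ++ p.2.drop t := by
    rintro ⟨u, v⟩ ⟨hu, hv, -, ⟨r, hr⟩⟩
    have hdl : ((f : List A).drop s).length = t := by
      simp [ht, hL]
    rw [← hr]
    congr 1
    rw [← hdl, List.drop_left]
  have hinj : Set.InjOn (fun p : List A × List A => (p.1.take (m - s), p.2.drop t))
      (Bad2 F m n f s) := by
    intro p hp q hq h
    have h1 : p.1.take (m - s) = q.1.take (m - s) := congrArg Prod.fst h
    have h2 : p.2.drop t = q.2.drop t := congrArg Prod.snd h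
    have e1 : p.1 = q.1 := by rw [hkey1 p hp, hkey1 q hq, h1]
    have e2 : p.2 = q.2 := by rw [hkey2 p hp, hkey2 q hq, h2]
    exact Prod.ext e1 e2
  have himg : (fun p : List A × List A => (p.1.take (m - s), p.2.drop t)) '' Bad2 F m n f s ⊆
      (langN F (m - s)) ×ˢ (langN F (n - t)) := by
    rintro x ⟨⟨u, v⟩, ⟨hu, hv, -, -⟩, rfl⟩
    have h2 : v.drop t ∈ langN F (n - t) := by
      have := langN_infix hv (v.drop_suffix t).isInfix
      rwa [List.length_drop, hv.1] at this
    exact ⟨take_mem_langN hu (Nat.sub_le m s), h2⟩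
  calc (Bad2 F m n f s).ncard
      = ((fun p : List A × List A => (p.1.take (m - s), p.2.drop t)) '' Bad2 F m n f s).ncard :=
        (Set.ncard_image_of_injOn hinj).symm
    _ ≤ ((langN F (m - s)) ×ˢ (langN F (n - t))).ncard :=
        Set.ncard_le_ncard himg ((langN_finite F _).prod (langN_finite F _))
    _ = aN F (m - s) * aN F (n - t) := ncard_prod _ _

lemma pair_count (hF : ∀ f ∈ F, f ≠ ([] : List A)) (m n : ℕ) :
    aN F m * aN F n ≤ aN F (m + n) +
      ∑ f ∈ Ffin F (m + n), ∑ s ∈ Finset.Icc 1 ((f : List A).length - 1),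
        (Bad2 F m n f s).ncard := by
  classical
  set P := (langN F m) ×ˢ (langN F n) with hP
  set G := P ∩ {p : List A × List A | p.1 ++ p.2 ∈ langN F (m + n)} with hG
  set B := P ∩ {p : List A × List A | p.1 ++ p.2 ∉ langN F (m + n)} with hB
  have hPGB : P ⊆ G ∪ B := by
    intro p hp
    by_cases h : p.1 ++ p.2 ∈ langN F (m + n)
    · exact Or.inl ⟨hp, h⟩
    · exact Or.inr ⟨hp, h⟩
  have hGcard : G.ncard ≤ aN F (m + n) := by
    have hinj : Set.InjOn (fun p : List A × List A => p.1 ++ p.2) G := by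
      rintro ⟨u₁, v₁⟩ ⟨⟨hu₁, hv₁⟩, -⟩ ⟨u₂, v₂⟩ ⟨⟨hu₂, hv₂⟩, -⟩ h
      have h' : u₁ ++ v₁ = u₂ ++ v₂ := h
      have hl : u₁.length = u₂.length := by rw [hu₁.1, hu₂.1]
      obtain ⟨e1, e2⟩ := List.append_inj h' hl
      exact Prod.ext e1 e2
    have himg : (fun p : List A × List A => p.1 ++ p.2) '' G ⊆ langN F (m + n) := by
      rintro x ⟨p, ⟨-, hp⟩, rfl⟩
      exact hp
    calc G.ncard = ((fun p : List A × List A => p.1 ++ p.2) '' G).ncard :=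
          (Set.ncard_image_of_injOn hinj).symm
      _ ≤ aN F (m + n) := Set.ncard_le_ncard himg (langN_finite F _)
  have hBcov : B ⊆ ⋃ f ∈ Ffin F (m + n), ⋃ s ∈ Finset.Icc 1 ((f : List A).length - 1),
      Bad2 F m n f s := by
    rintro ⟨u, v⟩ ⟨⟨hu, hv⟩, hbad⟩
    have hlen : (u ++ v).length = m + n := by simp [hu.1, hv.1]
    have : ¬ ∀ f ∈ F, ¬ f <:+: u ++ v := fun h => hbad ⟨hlen, h⟩
    push_neg at this
    obtain ⟨f, hfF, hfinf⟩ := this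
    obtain ⟨w, z, hfwz, hwne, hzne, hwsuf, hzpre⟩ := crossing hfinf (hu.2 f hfF) (hv.2 f hfF)
    have hwl : 1 ≤ w.length := List.length_pos_iff.mpr hwne
    have hzl : 1 ≤ z.length := List.length_pos_iff.mpr hzne
    have hfl : f.length = w.length + z.length := by rw [hfwz]; simp
    have hwm : w.length ≤ m := by
      have := hwsuf.length_le
      rw [hu.1] at this
      exact this
    have hzn : z.length ≤ n := by
      have := hzpre.length_le
      rw [hv.1] at this
      exact this
    have hmem1 : (⟨f, hfF⟩ : ↥F) ∈ Ffin F (m + n) :=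
      mem_Ffin.mpr (by show f.length ≤ m + n; omega)
    have hmem2 : w.length ∈ Finset.Icc 1 (((⟨f, hfF⟩ : ↥F) : List A).length - 1) :=
      Finset.mem_Icc.mpr ⟨hwl, by show w.length ≤ f.length - 1; omega⟩
    refine Set.mem_biUnion hmem1 (Set.mem_biUnion hmem2 ?_)
    have htake : f.take w.length = w := by rw [hfwz, List.take_left]
    have hdrop : f.drop w.length = z := by rw [hfwz, List.drop_left]
    refine ⟨hu, hv, ?_, ?_⟩
    · show f.take w.length <:+ u
      rw [htake]; exact hwsuf
    · show f.drop w.length <+: v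
      rw [hdrop]; exact hzpre
  have hPcard : P.ncard = aN F m * aN F n := ncard_prod _ _
  have hfinB : ∀ f ∈ Ffin F (m + n),
      (⋃ s ∈ Finset.Icc 1 ((f : List A).length - 1), Bad2 F m n f s).Finite :=
    fun f _ => Set.Finite.biUnion (Finset.finite_toSet _) fun s _ => Bad2_finite F m n f s
  calc aN F m * aN F n = P.ncard := hPcard.symm
    _ ≤ (G ∪ B).ncard := Set.ncard_le_ncard hPGB
        ((((langN_finite F m).prod (langN_finite F n)).inter_of_left _).union
          (((langN_finite F m).prod (langN_finite F n)).inter_of_left _))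
    _ ≤ G.ncard + B.ncard := Set.ncard_union_le _ _
    _ ≤ aN F (m + n) + B.ncard := Nat.add_le_add hGcard le_rfl
    _ ≤ aN F (m + n) + ∑ f ∈ Ffin F (m + n), ∑ s ∈ Finset.Icc 1 ((f : List A).length - 1),
        (Bad2 F m n f s).ncard := by
      refine Nat.add_le_add le_rfl ?_
      refine le_trans (Set.ncard_le_ncard hBcov ?_) ?_
      · exact Set.Finite.biUnion (Finset.finite_toSet _) hfinB
      · refine le_trans (ncard_biUnion_le _ _ hfinB) ?_
        refine Finset.sum_le_sum fun f _ => ?_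
        exact ncard_biUnion_le _ _ fun s _ => Bad2_finite F m n f s

lemma supermult (hF : ∀ f ∈ F, f ≠ ([] : List A)) {c : ℝ} (hc1 : 1 ≤ c)
    (hstep : ∀ n, c * aN F n ≤ aN F (n + 1))
    (hsumS : Summable fun f : F =>
      (((f : List A).length : ℝ) - 1) * c ^ (-(((f : List A).length : ℤ)))) :
    ∀ m n : ℕ,
      (1 - ∑' f : F, (((f : List A).length : ℝ) - 1) * c ^ (-(((f : List A).length : ℤ)))) *
        ((aN F m : ℝ) * aN F n) ≤ aN F (m + n) := by
  classical
  have hc0 : (0 : ℝ) ≤ c := le_trans zero_le_one hc1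
  have hcpos : (0 : ℝ) < c := lt_of_lt_of_le zero_lt_one hc1
  set S := ∑' f : F, (((f : List A).length : ℝ) - 1) * c ^ (-(((f : List A).length : ℤ)))
    with hSdef
  intro m n
  have hgeom : ∀ j i, i ≤ j → c ^ (j - i) * (aN F i : ℝ) ≤ aN F j := fun j i hij =>
    geom_of_step hc0 (aN F) (fun k _ => hstep k) j le_rfl i hij
  -- the key bound for each bad set
  have hbad : ∀ f ∈ Ffin F (m + n), ∀ s ∈ Finset.Icc 1 ((f : List A).length - 1),
      ((Bad2 F m n f s).ncard : ℝ) ≤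
        (aN F m : ℝ) * aN F n * c ^ (-(((f : List A).length : ℤ))) := by
    intro f hf s hs
    set L := (f : List A).length with hL
    obtain ⟨hs1, hs2⟩ := Finset.mem_Icc.mp hs
    have hLpos : 1 ≤ L := List.length_pos_iff.mpr (hF _ f.2)
    have hsL : s ≤ L := by omega
    have hzpow : c ^ (-(L : ℤ)) = (c ^ L)⁻¹ := by
      rw [← zpow_natCast c L, ← zpow_neg]
    have hcL : (0 : ℝ) < c ^ L := pow_pos hcpos _
    by_cases hcase : s ≤ m ∧ L - s ≤ n
    · obtain ⟨hsm, hsn⟩ := hcase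
      set t := L - s with ht
      have hBn := Bad2_ncard F m n f hsL hsm hsn
      have hB : ((Bad2 F m n f s).ncard : ℝ) ≤ (aN F (m - s) : ℝ) * aN F (n - t) := by
        exact_mod_cast hBn
      have h1 : c ^ s * (aN F (m - s) : ℝ) ≤ aN F m := by
        have := hgeom m (m - s) (Nat.sub_le m s)
        rwa [Nat.sub_sub_self hsm] at this
      have h2 : c ^ t * (aN F (n - t) : ℝ) ≤ aN F n := by
        have := hgeom n (n - t) (Nat.sub_le n t)
        rwa [Nat.sub_sub_self hsn] at this
      have hLst : c ^ L = c ^ s * c ^ t := by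
        rw [← pow_add]
        congr 1
        omega
      rw [hzpow, ← div_eq_mul_inv, le_div_iff₀ hcL]
      calc ((Bad2 F m n f s).ncard : ℝ) * c ^ L
          ≤ ((aN F (m - s) : ℝ) * aN F (n - t)) * c ^ L :=
            mul_le_mul_of_nonneg_right hB (le_of_lt hcL)
        _ = (c ^ s * (aN F (m - s) : ℝ)) * (c ^ t * (aN F (n - t) : ℝ)) := by
            rw [hLst]; ring
        _ ≤ (aN F m : ℝ) * aN F n := by
            apply mul_le_mul h1 h2 (by positivity) (Nat.cast_nonneg _)
    · have hempty : Bad2 F m n f s = ∅ := by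
        ext ⟨u, v⟩
        simp only [Set.mem_empty_iff_false, iff_false]
        rintro ⟨hu, hv, hsuf, hpre⟩
        have e1 : ((f : List A).take s).length ≤ m := by
          have := hsuf.length_le
          rwa [hu.1] at this
        have e2 : ((f : List A).drop s).length ≤ n := by
          have := hpre.length_le
          rwa [hv.1] at this
        rw [List.length_take] at e1
        rw [List.length_drop] at e2
        omega
      rw [hempty]
      simp only [Set.ncard_empty, Nat.cast_zero]
      positivity
  -- sum the bad bounds
  have hsum1 : ∀ f ∈ Ffin F (m + n),
      ∑ s ∈ Finset.Icc 1 ((f : List A).length - 1), ((Bad2 F m n f s).ncard : ℝ) ≤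
        ((((f : List A).length : ℝ) - 1)) *
          ((aN F m : ℝ) * aN F n * c ^ (-(((f : List A).length : ℤ)))) := by
    intro f hf
    have hLpos : 1 ≤ (f : List A).length := List.length_pos_iff.mpr (hF _ f.2)
    have hcard : (Finset.Icc 1 ((f : List A).length - 1)).card = (f : List A).length - 1 := by
      rw [Nat.card_Icc]
      omega
    have := Finset.sum_le_card_nsmul (Finset.Icc 1 ((f : List A).length - 1))
      (fun s => ((Bad2 F m n f s).ncard : ℝ))
      ((aN F m : ℝ) * aN F n * c ^ (-(((f : List A).length : ℤ)))) (hbad f hf)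
    rw [hcard, nsmul_eq_mul] at this
    refine le_trans this (le_of_eq ?_)
    congr 1
    push_cast [Nat.cast_sub hLpos]
    ring
  have hSnn : ∀ f : ↥F,
      0 ≤ (((f : List A).length : ℝ) - 1) * c ^ (-(((f : List A).length : ℤ))) := by
    intro f
    have hLpos : 1 ≤ (f : List A).length := List.length_pos_iff.mpr (hF _ f.2)
    have : (1 : ℝ) ≤ ((f : List A).length : ℝ) := by exact_mod_cast hLpos
    have hz : (0 : ℝ) ≤ c ^ (-(((f : List A).length : ℤ))) := zpow_nonneg hc0 _
    nlinarith
  have hsum2 : ∑ f ∈ Ffin F (m + n), ((((f : List A).length : ℝ) - 1)) *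
        (c ^ (-(((f : List A).length : ℤ)))) ≤ S :=
    Summable.sum_le_tsum _ (fun f _ => hSnn f) hsumS
  have hnat := pair_count (F := F) hF m n
  have hcast : (aN F m : ℝ) * aN F n ≤ (aN F (m + n) : ℝ) +
      ∑ f ∈ Ffin F (m + n), ∑ s ∈ Finset.Icc 1 ((f : List A).length - 1),
        ((Bad2 F m n f s).ncard : ℝ) := by
    exact_mod_cast hnat
  have hfinal : ∑ f ∈ Ffin F (m + n), ∑ s ∈ Finset.Icc 1 ((f : List A).length - 1),
      ((Bad2 F m n f s).ncard : ℝ) ≤ (aN F m : ℝ) * aN F n * S := by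
    calc ∑ f ∈ Ffin F (m + n), ∑ s ∈ Finset.Icc 1 ((f : List A).length - 1),
        ((Bad2 F m n f s).ncard : ℝ)
        ≤ ∑ f ∈ Ffin F (m + n), ((((f : List A).length : ℝ) - 1)) *
          ((aN F m : ℝ) * aN F n * c ^ (-(((f : List A).length : ℤ)))) :=
          Finset.sum_le_sum hsum1
      _ = (aN F m : ℝ) * aN F n * ∑ f ∈ Ffin F (m + n), ((((f : List A).length : ℝ) - 1)) *
          (c ^ (-(((f : List A).length : ℤ)))) := by
          rw [Finset.mul_sum]
          congr 1
          ext f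
          ring
      _ ≤ (aN F m : ℝ) * aN F n * S := by
          apply mul_le_mul_of_nonneg_left hsum2 (by positivity)
  linarith


lemma bernoulli_pow {x y : ℝ} (hx : 0 < x) (hxy : x ≤ y) (p : ℕ) :
    x ^ (p + 1) + ((p : ℝ) + 1) * (y - x) * x ^ p ≤ y ^ (p + 1) := by
  have ha : (0 : ℝ) ≤ (y - x) / x := div_nonneg (by linarith) hx.le
  have hb := one_add_mul_le_pow (by linarith : (-2 : ℝ) ≤ (y - x) / x) (p + 1)
  have hyx : 1 + (y - x) / x = y / x := by field_simp; ring
  rw [hyx] at hb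
  have hxp : (0 : ℝ) < x ^ (p + 1) := pow_pos hx _
  have hm := mul_le_mul_of_nonneg_right hb hxp.le
  rw [div_pow, div_mul_cancel₀ _ hxp.ne'] at hm
  refine le_trans (le_of_eq ?_) hm
  have hxps : x ^ (p + 1) = x ^ p * x := pow_succ x p
  field_simp
  push_cast
  ring

lemma tangent_ineq {x y : ℝ} (hx : 0 < x) (hxy : x ≤ y) (t : ℕ) :
    (t : ℝ) * (y - x) * (y ^ (t + 1))⁻¹ ≤ (x ^ t)⁻¹ - (y ^ t)⁻¹ := by
  have hy : (0 : ℝ) < y := lt_of_lt_of_le hx hxy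
  rcases t with _ | p
  · simp
  · have h1 := bernoulli_pow hx hxy p
    have hA : ((p : ℝ) + 1) * (y - x) * x ^ p ≤ y ^ (p + 1) - x ^ (p + 1) := by linarith
    have hxt : (0 : ℝ) < x ^ (p + 1) := pow_pos hx _
    have hyt : (0 : ℝ) < y ^ (p + 1) := pow_pos hy _
    have hyt2 : (0 : ℝ) < y ^ (p + 2) := pow_pos hy _
    have hsub : (0 : ℝ) ≤ y ^ (p + 1) - x ^ (p + 1) :=
      sub_nonneg.mpr (pow_le_pow_left₀ hx.le hxy _)
    have key : ((p : ℝ) + 1) * (y - x) * (x ^ (p + 1) * y ^ (p + 1)) ≤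
        (y ^ (p + 1) - x ^ (p + 1)) * y ^ (p + 2) := by
      calc ((p : ℝ) + 1) * (y - x) * (x ^ (p + 1) * y ^ (p + 1))
          = (((p : ℝ) + 1) * (y - x) * x ^ p) * (x * y ^ (p + 1)) := by
            rw [pow_succ]; ring
        _ ≤ (y ^ (p + 1) - x ^ (p + 1)) * (x * y ^ (p + 1)) :=
            mul_le_mul_of_nonneg_right hA (by positivity)
        _ ≤ (y ^ (p + 1) - x ^ (p + 1)) * y ^ (p + 2) := by
            apply mul_le_mul_of_nonneg_left _ hsub
            calc x * y ^ (p + 1) ≤ y * y ^ (p + 1) := mul_le_mul_of_nonneg_right hxy hyt.le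
              _ = y ^ (p + 2) := (pow_succ' y (p + 1)).symm
    have heq : (x ^ (p + 1))⁻¹ - (y ^ (p + 1))⁻¹ =
        (y ^ (p + 1) - x ^ (p + 1)) / (x ^ (p + 1) * y ^ (p + 1)) := by
      field_simp
    have hlhs : ((p + 1 : ℕ) : ℝ) * (y - x) * (y ^ (p + 1 + 1))⁻¹ =
        (((p : ℝ) + 1) * (y - x)) / y ^ (p + 2) := by
      push_cast
      rw [div_eq_mul_inv]
    rw [hlhs, heq, div_le_div_iff₀ hyt2 (by positivity)]
    calc ((p : ℝ) + 1) * (y - x) * (x ^ (p + 1) * y ^ (p + 1)) ≤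
        (y ^ (p + 1) - x ^ (p + 1)) * y ^ (p + 2) := key
      _ = (y ^ (p + 1) - x ^ (p + 1)) * y ^ (p + 2) := rfl

lemma zpow_one_sub {x : ℝ} (hx : 0 < x) {L : ℕ} (hL : 1 ≤ L) :
    x ^ ((1 : ℤ) - (L : ℤ)) = (x ^ (L - 1 : ℕ))⁻¹ := by
  rw [← zpow_natCast x (L - 1), ← zpow_neg]
  congr 1
  omega

lemma zpow_neg_nat (x : ℝ) (L : ℕ) : x ^ (-(L : ℤ)) = (x ^ L)⁻¹ := by
  rw [← zpow_natCast x L, ← zpow_neg]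

lemma term_antitone {x y : ℝ} (hx : 0 < x) (hxy : x ≤ y) {L : ℕ} (hL : 1 ≤ L) :
    y ^ ((1 : ℤ) - (L : ℤ)) ≤ x ^ ((1 : ℤ) - (L : ℤ)) := by
  have hy : (0 : ℝ) < y := lt_of_lt_of_le hx hxy
  rw [zpow_one_sub hx hL, zpow_one_sub hy hL]
  exact inv_anti₀ (pow_pos hx _) (pow_le_pow_left₀ hx.le hxy _)

lemma tangent_zpow {x y : ℝ} (hx : 0 < x) (hxy : x ≤ y) {L : ℕ} (hL : 1 ≤ L) :
    (y - x) * (((L : ℝ) - 1) * y ^ (-(L : ℤ))) ≤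
      x ^ ((1 : ℤ) - (L : ℤ)) - y ^ ((1 : ℤ) - (L : ℤ)) := by
  have hy : (0 : ℝ) < y := lt_of_lt_of_le hx hxy
  set t := L - 1 with ht
  have hLt : L = t + 1 := by omega
  have h := tangent_ineq hx hxy t
  rw [zpow_one_sub hx hL, zpow_one_sub hy hL, zpow_neg_nat]
  have hcast : ((L : ℝ) - 1) = (t : ℝ) := by
    rw [hLt]; push_cast; ring
  rw [hcast]
  have hyL : y ^ L = y ^ (t + 1) := by rw [hLt]
  rw [hyL]
  calc (y - x) * ((t : ℝ) * (y ^ (t + 1))⁻¹) = (t : ℝ) * (y - x) * (y ^ (t + 1))⁻¹ := by ring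
    _ ≤ (x ^ t)⁻¹ - (y ^ t)⁻¹ := h

variable {A : Type*} [Fintype A] {F : Set (List A)}

lemma chooseC (hF : ∀ f ∈ F, f ≠ ([] : List A)) {β : ℝ} (hβ : 1 ≤ β)
    (hsum : Summable fun f : F => β ^ ((1 : ℤ) - ((f : List A).length : ℤ)))
    (hcond : β + ∑' f : F, β ^ ((1 : ℤ) - ((f : List A).length : ℤ)) < (Fintype.card A : ℝ)) :
    ∃ c : ℝ, 1 ≤ c ∧
      (Summable fun f : F => c ^ ((1 : ℤ) - ((f : List A).length : ℤ))) ∧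
      (c + ∑' f : F, c ^ ((1 : ℤ) - ((f : List A).length : ℤ)) ≤ (Fintype.card A : ℝ)) ∧
      (Summable fun f : F =>
        (((f : List A).length : ℝ) - 1) * c ^ (-((f : List A).length : ℤ))) ∧
      (∑' f : F, (((f : List A).length : ℝ) - 1) * c ^ (-((f : List A).length : ℤ)) < 1) := by
  classical
  set K := (Fintype.card A : ℝ) with hK
  have hβ0 : (0 : ℝ) < β := lt_of_lt_of_le one_pos hβ
  set g : ℝ → ℝ := fun x => ∑' f : F, x ^ ((1 : ℤ) - ((f : List A).length : ℤ)) with hg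
  have hLone : ∀ f : ↥F, 1 ≤ (f : List A).length := fun f => List.length_pos_iff.mpr (hF _ f.2)
  have hgsumm : ∀ {x : ℝ}, β ≤ x →
      Summable fun f : F => x ^ ((1 : ℤ) - ((f : List A).length : ℤ)) := by
    intro x hx
    exact Summable.of_nonneg_of_le (fun f => zpow_nonneg (by linarith) _)
      (fun f => term_antitone hβ0 hx (hLone f)) hsum
  have hganti : ∀ {x y : ℝ}, β ≤ x → x ≤ y → g y ≤ g x := by
    intro x y hx hxy
    exact Summable.tsum_le_tsum (fun f => term_antitone (by linarith) hxy (hLone f))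
      (hgsumm (le_trans hx hxy)) (hgsumm hx)
  by_contra hcon
  push_neg at hcon
  set D := K - β - g β with hD
  have hgβ : g β = ∑' f : F, β ^ ((1 : ℤ) - ((f : List A).length : ℤ)) := rfl
  have hD0 : 0 < D := by rw [hD, hgβ]; linarith
  set cs : ℕ → ℝ := fun j => Nat.rec β (fun _ x => K - g x) j with hcs
  have hcs0 : cs 0 = β := rfl
  have hcss : ∀ j, cs (j + 1) = K - g (cs j) := fun _ => rfl
  have main : ∀ j, β ≤ cs j ∧ cs j + g (cs j) ≤ K ∧ β + j * D ≤ cs j := by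
    intro j
    induction j with
    | zero =>
      refine ⟨le_rfl, ?_, by simp [hcs0]⟩
      rw [hcs0, hgβ]
      linarith
    | succ j ih =>
      obtain ⟨h1, h2, h3⟩ := ih
      have hmono : cs j ≤ cs (j + 1) := by rw [hcss]; linarith
      have hβ1 : β ≤ cs (j + 1) := le_trans h1 hmono
      have hg2 : g (cs (j + 1)) ≤ g (cs j) := hganti h1 hmono
      refine ⟨hβ1, by rw [hcss]; linarith, ?_⟩
      rcases Nat.eq_zero_or_pos j with rfl | hj
      · rw [hcss, hcs0]
        have : K - g β = β + D := by rw [hD]; ring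
        rw [this]
        push_cast
        linarith
      · have hlt : β < cs j := by
          have hj1 : (1 : ℝ) ≤ (j : ℝ) := by exact_mod_cast hj
          nlinarith
        have hcsj0 : (0 : ℝ) < cs j := lt_trans hβ0 hlt
        have hsub0 : (0 : ℝ) < cs j - β := by linarith
        have hSsum : Summable fun f : F =>
            (((f : List A).length : ℝ) - 1) * (cs j) ^ (-((f : List A).length : ℤ)) := by
          refine Summable.of_nonneg_of_le (fun f => ?_) (fun f => ?_)
            (((hsum.sub (hgsumm h1)).div_const (cs j - β)))
          · have h1' : (1 : ℝ) ≤ ((f : List A).length : ℝ) := by exact_mod_cast hLone f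
            have h2' := zpow_nonneg hcsj0.le (-((f : List A).length : ℤ))
            nlinarith
          · rw [le_div_iff₀ hsub0]
            have := tangent_zpow hβ0 hlt.le (hLone f)
            calc (((f : List A).length : ℝ) - 1) * (cs j) ^ (-((f : List A).length : ℤ)) *
                  (cs j - β)
                = (cs j - β) * ((((f : List A).length : ℝ) - 1) *
                    (cs j) ^ (-((f : List A).length : ℤ))) := by ring
              _ ≤ _ := this
        have hS1 : 1 ≤ ∑' f : F,
            (((f : List A).length : ℝ) - 1) * (cs j) ^ (-((f : List A).length : ℤ)) :=
          hcon (cs j) (le_trans hβ h1) (hgsumm h1) h2 hSsum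
        have hkey : (cs j - β) * ∑' f : F,
            (((f : List A).length : ℝ) - 1) * (cs j) ^ (-((f : List A).length : ℤ)) ≤
              g β - g (cs j) := by
          have hts := Summable.tsum_le_tsum (fun f => tangent_zpow hβ0 hlt.le (hLone f))
            (hSsum.mul_left (cs j - β)) (hsum.sub (hgsumm h1))
          rw [Summable.tsum_sub hsum (hgsumm h1)] at hts
          rw [← tsum_mul_left]
          exact hts
        have hstep : cs j + D ≤ cs (j + 1) := by
          rw [hcss, hD]
          nlinarith
        push_cast
        push_cast at h3
        linarith
  obtain ⟨N, hN⟩ := exists_nat_gt ((K - β) / D)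
  obtain ⟨h1, h2, h3⟩ := main N
  have hgN : 0 ≤ g (cs N) :=
    tsum_nonneg fun f => zpow_nonneg (by linarith : (0:ℝ) ≤ cs N) _
  have hNK : β + N * D ≤ K := by linarith
  have : (K - β) / D < N := hN
  rw [div_lt_iff₀ hD0] at this
  linarith



lemma rpow_pow_inv {x : ℝ} (hx : 0 ≤ x) {n : ℕ} (hn : n ≠ 0) :
    (x ^ (1 / (n : ℝ))) ^ n = x := by
  have hn' : ((n : ℝ)) ≠ 0 := Nat.cast_ne_zero.mpr hn
  rw [← Real.rpow_natCast (x ^ (1 / (n : ℝ))) n, ← Real.rpow_mul hx, one_div,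
    inv_mul_cancel₀ hn', Real.rpow_one]

lemma rpow_iter {x : ℝ} (hx : 0 ≤ x) {k n : ℕ} (hk : 1 ≤ k) (hn : 1 ≤ n) :
    (x ^ k) ^ (1 / ((k * n : ℕ) : ℝ)) = x ^ (1 / (n : ℝ)) := by
  rw [← Real.rpow_natCast x k, ← Real.rpow_mul hx]
  congr 1
  have he : ((k * n : ℕ) : ℝ) = (k : ℝ) * (n : ℝ) := by push_cast; ring
  rw [he]
  have hk0 : (k : ℝ) ≠ 0 := Nat.cast_ne_zero.mpr (by omega)
  have hn0 : (n : ℝ) ≠ 0 := Nat.cast_ne_zero.mpr (by omega)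
  field_simp


lemma drop_mem_langN {w : List A} {n j : ℕ} (hw : w ∈ langN F n) :
    w.drop j ∈ langN F (n - j) := by
  have h := langN_infix hw (w.drop_suffix j).isInfix
  rwa [List.length_drop, hw.1] at h

lemma aN_submul (m n : ℕ) : aN F (m + n) ≤ aN F m * aN F n := by
  classical
  have himg : (fun w : List A => (w.take m, w.drop m)) '' langN F (m + n) ⊆
      (langN F m) ×ˢ (langN F n) := by
    rintro ⟨x, y⟩ ⟨w, hw, h⟩
    obtain ⟨rfl, rfl⟩ : w.take m = x ∧ w.drop m = y := Prod.mk.injEq .. ▸ h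
    exact ⟨take_mem_langN hw (Nat.le_add_right m n), by
      simpa using drop_mem_langN (j := m) hw⟩
  have hinj : Set.InjOn (fun w : List A => (w.take m, w.drop m)) (langN F (m + n)) := by
    intro w₁ _ w₂ _ h
    have h1 : w₁.take m = w₂.take m := congrArg Prod.fst h
    have h2 : w₁.drop m = w₂.drop m := congrArg Prod.snd h
    rw [← w₁.take_append_drop m, h1, h2, w₂.take_append_drop m]
  calc aN F (m + n) = ((fun w : List A => (w.take m, w.drop m)) '' langN F (m + n)).ncard :=
        (Set.ncard_image_of_injOn hinj).symm
    _ ≤ ((langN F m) ×ˢ (langN F n)).ncard :=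
        Set.ncard_le_ncard himg ((langN_finite F m).prod (langN_finite F n))
    _ = aN F m * aN F n := ncard_prod _ _

lemma sub_iter (hF : ∀ f ∈ F, f ≠ ([] : List A)) (k n : ℕ) :
    (aN F (k * n) : ℝ) ≤ (aN F n : ℝ) ^ k := by
  induction k with
  | zero => simp [aN_zero hF]
  | succ k ih =>
    have hsub : (aN F (k * n + n) : ℝ) ≤ (aN F (k * n) : ℝ) * aN F n := by
      exact_mod_cast aN_submul (k * n) n
    calc (aN F ((k + 1) * n) : ℝ) = (aN F (k * n + n) : ℝ) := by rw [Nat.succ_mul]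
      _ ≤ (aN F (k * n) : ℝ) * aN F n := hsub
      _ ≤ (aN F n : ℝ) ^ k * aN F n := mul_le_mul_of_nonneg_right ih (Nat.cast_nonneg _)
      _ = (aN F n : ℝ) ^ (k + 1) := (pow_succ _ _).symm

lemma super_iter {γ : ℝ} (hγ0 : 0 ≤ γ)
    (hsuper : ∀ m n : ℕ, γ * ((aN F m : ℝ) * aN F n) ≤ aN F (m + n)) :
    ∀ k n : ℕ, 1 ≤ k → (γ * (aN F n : ℝ)) ^ k ≤ γ * aN F (k * n) := by
  intro k n hk
  induction k with
  | zero => omega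
  | succ k ih =>
    rcases Nat.eq_zero_or_pos k with rfl | hk'
    · simp
    · have h1 := ih hk'
      have h2 := hsuper (k * n) n
      have hb : (0 : ℝ) ≤ γ * aN F n := mul_nonneg hγ0 (Nat.cast_nonneg _)
      calc (γ * (aN F n : ℝ)) ^ (k + 1) = (γ * (aN F n : ℝ)) ^ k * (γ * aN F n) :=
            pow_succ _ _
        _ ≤ (γ * (aN F (k * n) : ℝ)) * (γ * aN F n) := mul_le_mul_of_nonneg_right h1 hb
        _ = γ * (γ * ((aN F (k * n) : ℝ) * aN F n)) := by ring
        _ ≤ γ * aN F (k * n + n) := mul_le_mul_of_nonneg_left h2 hγ0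
        _ = γ * aN F ((k + 1) * n) := by rw [Nat.succ_mul]


end Stmt5Aux


/-- If there is `β ≥ 1` with `β + Σ_{f∈ℱ} β^(1−|f|) < |𝒜|`, then there is a
constant `C > 0` such that for all `n`,
`α(𝒜,ℱ)^n ≤ |ℒ_n(𝒜,ℱ)| ≤ C⁻¹·α(𝒜,ℱ)^n`, where `α(𝒜,ℱ)` is the growth rate
`lim_n |ℒ_n(𝒜,ℱ)|^(1/n)`. -/
theorem stmt5 {A : Type*} [Fintype A] (F : Set (List A))
    (hF : ∀ f ∈ F, f ≠ ([] : List A)) (β : ℝ) (hβ : 1 ≤ β)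
    (hsum : Summable fun f : F => β ^ ((1 : ℤ) - ((f : List A).length : ℤ)))
    (hcond : β + ∑' f : F, β ^ ((1 : ℤ) - ((f : List A).length : ℤ)) < (Fintype.card A : ℝ)) :
    ∃ C : ℝ, 0 < C ∧
      ∀ α : ℝ,
        Tendsto (fun n : ℕ => ((langN F n).ncard : ℝ) ^ (1 / (n : ℝ))) atTop (nhds α) →
        ∀ n : ℕ, α ^ n ≤ ((langN F n).ncard : ℝ) ∧ ((langN F n).ncard : ℝ) ≤ C⁻¹ * α ^ n := by
  classical
  open Stmt5Aux in
  obtain ⟨c, hc1, hgsum, hgle, hSsum, hSlt⟩ := Stmt5Aux.chooseC hF hβ hsum hcond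
  have hc0 : (0 : ℝ) < c := lt_of_lt_of_le one_pos hc1
  have hstep := Stmt5Aux.growth hF hc1 hgsum hgle
  have hone := Stmt5Aux.one_le_aN hF hc1 hstep
  set S := ∑' f : ↥F, (((f : List A).length : ℝ) - 1) * c ^ (-((f : List A).length : ℤ))
    with hS
  have hS0 : 0 ≤ S := by
    rw [hS]
    refine tsum_nonneg fun f => ?_
    have h1' : (1 : ℝ) ≤ ((f : List A).length : ℝ) := by
      exact_mod_cast List.length_pos_iff.mpr (hF _ f.2)
    have h2' := zpow_nonneg hc0.le (-((f : List A).length : ℤ))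
    nlinarith
  set γ := 1 - S with hγ
  have hγ0 : (0 : ℝ) < γ := by rw [hγ]; linarith
  have hγ1 : γ ≤ 1 := by rw [hγ]; linarith
  have hsuper0 := Stmt5Aux.supermult hF hc1 hstep hSsum
  have hsuper : ∀ m n : ℕ, γ * ((Stmt5Aux.aN F m : ℝ) * Stmt5Aux.aN F n) ≤
      Stmt5Aux.aN F (m + n) := by
    intro m n
    have := hsuper0 m n
    rw [hγ, hS]
    exact this
  have hinvle : ∀ x y : ℝ, γ * x ≤ y → x ≤ γ⁻¹ * y := by
    intro x y h
    rw [← div_eq_inv_mul, le_div_iff₀ hγ0]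
    linarith
  refine ⟨γ, hγ0, ?_⟩
  intro α hα n
  have hq : ∀ m, (1 : ℝ) ≤ (Stmt5Aux.aN F m : ℝ) := fun m => by exact_mod_cast hone m
  have hα0 : 0 ≤ α :=
    ge_of_tendsto hα (Eventually.of_forall fun m => Real.rpow_nonneg (Nat.cast_nonneg _) _)
  have hncard : ((langN F n).ncard : ℝ) = (Stmt5Aux.aN F n : ℝ) := rfl
  rcases Nat.eq_zero_or_pos n with rfl | hn
  · constructor
    · rw [pow_zero, hncard]
      exact hq 0
    · rw [pow_zero, hncard, Stmt5Aux.aN_zero hF]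
      simp only [Nat.cast_one]
      exact hinvle 1 1 (by linarith)
  · have hn0 : n ≠ 0 := by omega
    have hn1 : 1 ≤ n := hn
    have hφ : Tendsto (fun k : ℕ => k * n) atTop atTop := by
      apply tendsto_atTop_atTop.mpr
      intro b
      exact ⟨b, fun a ha => le_trans ha (Nat.le_mul_of_pos_right a hn)⟩
    have hαsub : Tendsto
        (fun k : ℕ => ((Stmt5Aux.aN F (k * n) : ℝ)) ^ (1 / ((k * n : ℕ) : ℝ))) atTop
        (nhds α) := hα.comp hφ
    constructor
    · have hev : ∀ᶠ k in atTop,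
          ((Stmt5Aux.aN F (k * n) : ℝ)) ^ (1 / ((k * n : ℕ) : ℝ)) ≤
            (Stmt5Aux.aN F n : ℝ) ^ (1 / (n : ℝ)) := by
        refine eventually_atTop.mpr ⟨1, fun k hk => ?_⟩
        have h1 := Stmt5Aux.sub_iter hF k n
        have h2 : ((Stmt5Aux.aN F (k * n) : ℝ)) ^ (1 / ((k * n : ℕ) : ℝ)) ≤
            (((Stmt5Aux.aN F n : ℝ)) ^ k) ^ (1 / ((k * n : ℕ) : ℝ)) :=
          Real.rpow_le_rpow (Nat.cast_nonneg _) h1 (by positivity)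
        rwa [Stmt5Aux.rpow_iter (Nat.cast_nonneg _) hk hn1] at h2
      have hle : α ≤ (Stmt5Aux.aN F n : ℝ) ^ (1 / (n : ℝ)) := le_of_tendsto hαsub hev
      have h3 := pow_le_pow_left₀ hα0 hle n
      rw [Stmt5Aux.rpow_pow_inv (Nat.cast_nonneg _) hn0] at h3
      rw [hncard]
      exact h3
    · have hbn0 : (0 : ℝ) ≤ γ * (Stmt5Aux.aN F n : ℝ) := by positivity
      have hev : ∀ᶠ k in atTop,
          (γ * (Stmt5Aux.aN F n : ℝ)) ^ (1 / (n : ℝ)) ≤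
            ((Stmt5Aux.aN F (k * n) : ℝ)) ^ (1 / ((k * n : ℕ) : ℝ)) := by
        refine eventually_atTop.mpr ⟨1, fun k hk => ?_⟩
        have h1 := Stmt5Aux.super_iter hγ0.le hsuper k n hk
        have h2 : γ * (Stmt5Aux.aN F (k * n) : ℝ) ≤ (Stmt5Aux.aN F (k * n) : ℝ) := by
          nlinarith [hq (k * n)]
        have h3 : ((γ * (Stmt5Aux.aN F n : ℝ)) ^ k) ^ (1 / ((k * n : ℕ) : ℝ)) ≤
            ((Stmt5Aux.aN F (k * n) : ℝ)) ^ (1 / ((k * n : ℕ) : ℝ)) :=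
          Real.rpow_le_rpow (by positivity) (le_trans h1 h2) (by positivity)
        rwa [Stmt5Aux.rpow_iter hbn0 hk hn1] at h3
      have hge : (γ * (Stmt5Aux.aN F n : ℝ)) ^ (1 / (n : ℝ)) ≤ α := ge_of_tendsto hαsub hev
      have h4 := pow_le_pow_left₀ (Real.rpow_nonneg hbn0 _) hge n
      rw [Stmt5Aux.rpow_pow_inv hbn0 hn0] at h4
      rw [hncard]
      exact hinvle _ _ h4
end

section
/- Let 𝒜 = {0,1,2} and let ℱ = {0·1^k·2 : k ≥ 0} = {02, 012, 0112, 01112, …}. Then ℒ(𝒜,ℱ) = {u0v : u ∈ {1,2}*, v ∈ {0,1}*} ∪ {1,2}*, and for all n ≥ 1, |ℒ_n(𝒜,ℱ)| = (n+2)·2^{n−1}. -/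
/-- The set of all finite words over `A` avoiding every forbidden factor in `F`. -/
def lang {A : Type*} (F : Set (List A)) : Set (List A) :=
  {w | ∀ f ∈ F, ¬ f <:+: w}

lemma fin3cases (a : Fin 3) : a = 0 ∨ a = 1 ∨ a = 2 := by
  revert a; decide

lemma first_split {α : Type*} [DecidableEq α] {a : α} {l : List α} (h : a ∈ l) :
    ∃ s t, l = s ++ a :: t ∧ a ∉ s := by
  induction l with
  | nil => simp at h
  | cons b l ih =>
    by_cases hb : b = a
    · exact ⟨[], l, by simp [hb], by simp⟩
    · rcases List.mem_cons.mp h with h' | h'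
      · exact absurd h'.symm hb
      · obtain ⟨s, t, h1, h2⟩ := ih h'
        refine ⟨b :: s, t, by simp [h1], ?_⟩
        simp only [List.mem_cons]
        rintro (rfl | hh)
        · exact hb rfl
        · exact h2 hh

lemma factor_aux :
    ∀ m (y x : List (Fin 3)), y.length ≤ m → (2:Fin 3) ∈ y →
      ∃ k, ((0:Fin 3) :: (List.replicate k 1 ++ [2])) <:+: x ++ 0 :: y := by
  intro m
  induction m with
  | zero =>
    intro y x hy h2
    rw [Nat.le_zero, List.length_eq_zero_iff] at hy; subst hy; simp at h2
  | succ m ih =>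
    intro y x hy h2
    obtain ⟨s, t, hyst, hs2⟩ := first_split h2
    by_cases h0 : (0:Fin 3) ∈ s
    · obtain ⟨s1, s2, hs⟩ := List.append_of_mem h0
      have h2' : (2:Fin 3) ∈ s2 ++ 2 :: t := by simp
      have hlen : (s2 ++ 2 :: t).length ≤ m := by
        subst hs; subst hyst; simp at hy ⊢; omega
      obtain ⟨k, hk⟩ := ih (s2 ++ 2 :: t) (x ++ 0 :: s1) hlen h2'
      refine ⟨k, ?_⟩
      have hrw : x ++ 0 :: y = (x ++ 0 :: s1) ++ 0 :: (s2 ++ 2 :: t) := by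
        subst hs; subst hyst; simp
      rw [hrw]; exact hk
    · have hs1 : ∀ a ∈ s, a = (1:Fin 3) := by
        intro a ha
        rcases fin3cases a with h | h | h
        · exact absurd (h ▸ ha) h0
        · exact h
        · exact absurd (h ▸ ha) hs2
      refine ⟨s.length, ⟨x, t, ?_⟩⟩
      have hrep : s = List.replicate s.length 1 := List.eq_replicate_length.mpr hs1
      subst hyst
      rw [← hrep]
      simp

lemma mem_lang_iff (w : List (Fin 3)) :
    (∀ f ∈ {l : List (Fin 3) | ∃ k : ℕ, l = 0 :: (List.replicate k 1 ++ [2])}, ¬ f <:+: w) ↔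
      ∀ x y : List (Fin 3), w = x ++ 0 :: y → (2:Fin 3) ∉ y := by
  constructor
  · intro h x y hw h2
    obtain ⟨k, hk⟩ := factor_aux y.length y x le_rfl h2
    exact h _ ⟨k, rfl⟩ (hw ▸ hk)
  · intro h f hf hinf
    obtain ⟨k, rfl⟩ := hf
    obtain ⟨s, t, hw⟩ := hinf
    have hrw : w = s ++ 0 :: (List.replicate k 1 ++ 2 :: t) := by rw [← hw]; simp
    exact h s _ hrw (by simp)

lemma two_mem_of_split : ∀ (u x v y : List (Fin 3)), (0:Fin 3) ∉ u →
    u ++ 0 :: v = x ++ 0 :: y → (2:Fin 3) ∈ y → (2:Fin 3) ∈ v := by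
  intro u
  induction u with
  | nil =>
    intro x v y _ he h2
    cases x with
    | nil => simp at he; subst he; exact h2
    | cons b x' =>
      simp at he
      rw [he.2]
      simp [h2]
  | cons a u' ih =>
    intro x v y h0 he h2
    cases x with
    | nil =>
      simp at he
      exact absurd (he.1 ▸ (List.mem_cons_self (a := a) (l := u'))) h0
    | cons b x' =>
      simp at he
      exact ih x' v y (fun hh => h0 (List.mem_cons_of_mem _ hh)) he.2 h2

lemma split_unique : ∀ (u1 u2 v1 v2 : List (Fin 3)), (0:Fin 3) ∉ u1 → (0:Fin 3) ∉ u2 →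
    u1 ++ 0 :: v1 = u2 ++ 0 :: v2 → u1 = u2 ∧ v1 = v2 := by
  intro u1
  induction u1 with
  | nil =>
    intro u2 v1 v2 _ h2 he
    cases u2 with
    | nil => simp_all
    | cons b t => simp at he; exact absurd (he.1 ▸ (List.mem_cons_self (a := b) (l := t))) h2
  | cons a t ih =>
    intro u2 v1 v2 h1 h2 he
    cases u2 with
    | nil =>
      simp at he
      exact absurd (he.1 ▸ (List.mem_cons_self (a := a) (l := t))) h1
    | cons b t' =>
      simp at he
      obtain ⟨h3, h4⟩ := ih t' v1 v2 (fun hh => h1 (List.mem_cons_of_mem _ hh))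
        (fun hh => h2 (List.mem_cons_of_mem _ hh)) he.2
      exact ⟨by rw [he.1, h3], h4⟩

lemma part1 : lang {l : List (Fin 3) | ∃ k : ℕ, l = 0 :: (List.replicate k 1 ++ [2])} =
      ({w : List (Fin 3) | ∃ u v : List (Fin 3),
          (∀ a ∈ u, a = 1 ∨ a = 2) ∧ (∀ a ∈ v, a = 0 ∨ a = 1) ∧ w = u ++ 0 :: v} ∪
        {w : List (Fin 3) | ∀ a ∈ w, a = 1 ∨ a = 2}) := by
  ext w
  rw [lang, Set.mem_setOf_eq, mem_lang_iff]
  constructor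
  · intro h
    by_cases h0 : (0:Fin 3) ∈ w
    · left
      obtain ⟨u, v, hw, hu0⟩ := first_split h0
      refine ⟨u, v, ?_, ?_, hw⟩
      · intro a ha
        rcases fin3cases a with h' | h' | h'
        · exact absurd (h' ▸ ha) hu0
        · exact Or.inl h'
        · exact Or.inr h'
      · intro a ha
        rcases fin3cases a with h' | h' | h'
        · exact Or.inl h'
        · exact Or.inr h'
        · exact absurd (h' ▸ ha) (h u v hw)
    · right
      intro a ha
      rcases fin3cases a with h' | h' | h'
      · exact absurd (h' ▸ ha) h0
      · exact Or.inl h'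
      · exact Or.inr h'
  · rintro (⟨u, v, hu, hv, rfl⟩ | h) x y hw h2
    · have h2v := two_mem_of_split u x v y
        (fun hh => by rcases hu 0 hh with h' | h' <;> exact absurd h' (by decide)) hw h2
      rcases hv 2 h2v with h' | h' <;> exact absurd h' (by decide)
    · have h0w : (0:Fin 3) ∈ x ++ 0 :: y := by simp
      rw [← hw] at h0w
      rcases h 0 h0w with h' | h' <;> exact absurd h' (by decide)

def wordB (n : ℕ) (f : Fin n → Fin 2) : List (Fin 3) :=
  List.ofFn (fun j => (f j).succ)

def wordA (n : ℕ) (p : (i : Fin n) × (Fin i.1 → Fin 2) × (Fin (n - 1 - i.1) → Fin 2)) :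
    List (Fin 3) :=
  (List.ofFn fun j => (p.2.1 j).succ) ++ 0 :: (List.ofFn fun j => (p.2.2 j).castSucc)

lemma no_zero_succ (m : ℕ) (f : Fin m → Fin 2) :
    (0:Fin 3) ∉ List.ofFn (fun j => (f j).succ) := by
  intro hm
  obtain ⟨j, hj⟩ := List.mem_ofFn.mp hm
  exact Fin.succ_ne_zero _ hj

lemma wordB_inj (n : ℕ) : Function.Injective (wordB n) := by
  intro f g h
  funext j
  exact Fin.succ_injective _ (congrFun (List.ofFn_inj.mp h) j)

lemma wordA_inj (n : ℕ) : Function.Injective (wordA n) := by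
  rintro ⟨i1, f1, g1⟩ ⟨i2, f2, g2⟩ h
  unfold wordA at h
  dsimp only at h
  obtain ⟨hu, hv⟩ := split_unique _ _ _ _ (no_zero_succ _ f1) (no_zero_succ _ f2) h
  have hlen : i1.1 = i2.1 := by
    have := congrArg List.length hu; simpa using this
  have hi : i1 = i2 := Fin.ext hlen
  subst hi
  have hf : f1 = f2 := by
    funext j; exact Fin.succ_injective _ (congrFun (List.ofFn_inj.mp hu) j)
  have hg : g1 = g2 := by
    funext j; exact Fin.castSucc_injective _ (congrFun (List.ofFn_inj.mp hv) j)
  subst hf; subst hg; rfl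

lemma exists_ofFn (c : Fin 2 → Fin 3) (u : List (Fin 3)) (hu : ∀ a ∈ u, ∃ b, c b = a) :
    ∃ f : Fin u.length → Fin 2, List.ofFn (fun j => c (f j)) = u := by
  induction u with
  | nil => exact ⟨Fin.elim0, by simp⟩
  | cons a t ih =>
    obtain ⟨b, hb⟩ := hu a (by simp)
    obtain ⟨f', hf'⟩ := ih (fun a ha => hu a (by simp [ha]))
    refine ⟨Fin.cons b f', ?_⟩
    rw [List.ofFn_succ]
    simp only [Fin.cons_zero, Fin.cons_succ, hb]
    rw [hf']

lemma ofFn_cast {α : Type*} {m m' : ℕ} (h : m = m') (F : Fin m' → α) :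
    List.ofFn (fun j : Fin m => F (Fin.cast h j)) = List.ofFn F := by
  subst h; rfl

noncomputable def Afin (n : ℕ) : Finset (List (Fin 3)) := Finset.univ.image (wordA n)
noncomputable def Bfin (n : ℕ) : Finset (List (Fin 3)) := Finset.univ.image (wordB n)

lemma succ2_cases (b : Fin 2) : b.succ = (1:Fin 3) ∨ b.succ = 2 := by revert b; decide
lemma castSucc2_cases (b : Fin 2) : b.castSucc = (0:Fin 3) ∨ b.castSucc = 1 := by
  revert b; decide

lemma setEq (n : ℕ) (hn : 1 ≤ n) :
    langN {l : List (Fin 3) | ∃ k : ℕ, l = 0 :: (List.replicate k 1 ++ [2])} n =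
      ↑(Afin n ∪ Bfin n) := by
  ext w
  have hmem : w ∈ langN {l : List (Fin 3) | ∃ k : ℕ, l = 0 :: (List.replicate k 1 ++ [2])} n ↔
      w.length = n ∧ w ∈ lang {l : List (Fin 3) | ∃ k : ℕ, l = 0 :: (List.replicate k 1 ++ [2])} :=
    Iff.rfl
  rw [hmem, part1]
  simp only [Finset.coe_union, Set.mem_union, Finset.mem_coe, Afin, Bfin,
    Finset.mem_image, Finset.mem_univ, true_and, Set.mem_setOf_eq]
  constructor
  · rintro ⟨hlen, (⟨u, v, hu, hv, rfl⟩ | hw)⟩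
    · left
      simp only [List.length_append, List.length_cons] at hlen
      have hiu : u.length < n := by omega
      obtain ⟨f, hf⟩ := exists_ofFn Fin.succ u (by
        intro a ha
        rcases hu a ha with h' | h'
        · exact ⟨0, by rw [h']; rfl⟩
        · exact ⟨1, by rw [h']; rfl⟩)
      obtain ⟨g', hg'⟩ := exists_ofFn Fin.castSucc v (by
        intro a ha
        rcases hv a ha with h' | h'
        · exact ⟨0, by rw [h']; rfl⟩
        · exact ⟨1, by rw [h']; rfl⟩)
      have hlv : n - 1 - u.length = v.length := by omega
      refine ⟨⟨⟨u.length, hiu⟩, f, fun j => g' (Fin.cast hlv j)⟩, ?_⟩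
      unfold wordA
      dsimp only
      rw [hf]
      congr 1
      congr 1
      rw [ofFn_cast hlv (fun j => (g' j).castSucc)]
      exact hg'
    · right
      obtain ⟨f, hf⟩ := exists_ofFn Fin.succ w (by
        intro a ha
        rcases hw a ha with h' | h'
        · exact ⟨0, by rw [h']; rfl⟩
        · exact ⟨1, by rw [h']; rfl⟩)
      refine ⟨fun j => f (Fin.cast hlen.symm j), ?_⟩
      unfold wordB
      dsimp only
      rw [ofFn_cast hlen.symm (fun j => (f j).succ)]
      exact hf
  · rintro (⟨⟨i, f, g⟩, rfl⟩ | ⟨f, rfl⟩)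
    · constructor
      · unfold wordA
        simp only [List.length_append, List.length_cons, List.length_ofFn]
        have := i.isLt; omega
      · left
        refine ⟨_, _, ?_, ?_, rfl⟩
        · intro a ha
          obtain ⟨j, hj⟩ := List.mem_ofFn.mp ha
          rcases succ2_cases (f j) with h' | h' <;> [left; right] <;> (rw [← hj]; exact h')
        · intro a ha
          obtain ⟨j, hj⟩ := List.mem_ofFn.mp ha
          rcases castSucc2_cases (g j) with h' | h' <;> [left; right] <;> (rw [← hj]; exact h')
    · constructor
      · simp [wordB]
      · right
        intro a ha
        obtain ⟨j, hj⟩ := List.mem_ofFn.mp ha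
        rcases succ2_cases (f j) with h' | h' <;> [left; right] <;> (rw [← hj]; exact h')

lemma disjAB (n : ℕ) : Disjoint (Afin n) (Bfin n) := by
  rw [Finset.disjoint_left]
  rintro w hwa hwb
  simp only [Afin, Bfin, Finset.mem_image, Finset.mem_univ, true_and] at hwa hwb
  obtain ⟨p, rfl⟩ := hwa
  obtain ⟨f, hf⟩ := hwb
  have h0 : (0:Fin 3) ∈ wordA n p := by unfold wordA; simp
  rw [← hf] at h0
  exact no_zero_succ n f h0

lemma cardB (n : ℕ) : (Bfin n).card = 2 ^ n := by
  rw [Bfin, Finset.card_image_of_injective _ (wordB_inj n), Finset.card_univ]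
  simp

lemma cardA (n : ℕ) : (Afin n).card = n * 2 ^ (n - 1) := by
  rw [Afin, Finset.card_image_of_injective _ (wordA_inj n), Finset.card_univ]
  rw [Fintype.card_sigma]
  have hterm : ∀ i : Fin n,
      Fintype.card ((Fin i.1 → Fin 2) × (Fin (n - 1 - i.1) → Fin 2)) = 2 ^ (n - 1) := by
    intro i
    simp only [Fintype.card_prod, Fintype.card_fun, Fintype.card_fin]
    rw [← pow_add]
    congr 1
    have := i.isLt; omega
  rw [Finset.sum_congr rfl (fun i _ => hterm i)]
  simp [mul_comm]

/-- Over `𝒜 = {0,1,2}`, with `ℱ = 01*2 = {02, 012, 0112, …}`, the language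
`ℒ(𝒜,ℱ)` is exactly `{u0v : u ∈ {1,2}*, v ∈ {0,1}*} ∪ {1,2}*`, and for every
`n ≥ 1` one has `|ℒ_n(𝒜,ℱ)| = (n+2)·2^(n−1)`. -/
theorem stmt7 :
    lang {l : List (Fin 3) | ∃ k : ℕ, l = 0 :: (List.replicate k 1 ++ [2])} =
      ({w : List (Fin 3) | ∃ u v : List (Fin 3),
          (∀ a ∈ u, a = 1 ∨ a = 2) ∧ (∀ a ∈ v, a = 0 ∨ a = 1) ∧ w = u ++ 0 :: v} ∪
        {w : List (Fin 3) | ∀ a ∈ w, a = 1 ∨ a = 2}) ∧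
    ∀ n : ℕ, 1 ≤ n →
      (langN {l : List (Fin 3) | ∃ k : ℕ, l = 0 :: (List.replicate k 1 ++ [2])} n).ncard =
        (n + 2) * 2 ^ (n - 1) := by
  refine ⟨part1, ?_⟩
  intro n hn
  rw [setEq n hn, Set.ncard_coe_finset, Finset.card_union_of_disjoint (disjAB n),
    cardA, cardB]
  obtain ⟨m, rfl⟩ : ∃ m, n = m + 1 := ⟨n - 1, by omega⟩
  simp only [Nat.add_sub_cancel]
  rw [pow_succ]
  ring
end
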